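/- arXiv:1612.01444 — 5 statements merged into one kernel-verified Lean document; each statement's English description precedes it below -/
import Mathlib

section
/- Let p and e be primes with p > 2 and e > 2, and let H = H(F_{p^e}) be the Heisenberg group with commutator subgroup H'. For any subgroups N₁, N₂ ≤ H' with |H : N₁| = |H : N₂| = p^{2e+2}, the groups H/N₁ and H/N₂ have the same quotient-group profile: for every finite group Q, the number of nontrivial normal subgroups K of H/N₁ with (H/N₁)/K isomorphic to Q equals the number of nontrivial normal subgroups K of H/N₂ with (H/N₂)/K isomorphic to Q. -/
/-- The Heisenberg group over a field `K`: underlying set `K × K × K` with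
multiplication `(α,β,γ)·(α',β',γ') = (α+α', β+β', γ+γ'+α·β')`. -/
def Heisenberg (K : Type) [Field K] : Type := K × K × K

namespace Heisenberg

variable {K : Type} [Field K]

instance : Mul (Heisenberg K) :=
  ⟨fun a b => (a.1 + b.1, a.2.1 + b.2.1, a.2.2 + b.2.2 + a.1 * b.2.1)⟩

instance : One (Heisenberg K) := ⟨((0 : K), (0 : K), (0 : K))⟩

instance : Inv (Heisenberg K) :=
  ⟨fun a => (-a.1, -a.2.1, -a.2.2 + a.1 * a.2.1)⟩

lemma mul_def (a b : Heisenberg K) :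
    a * b = (a.1 + b.1, a.2.1 + b.2.1, a.2.2 + b.2.2 + a.1 * b.2.1) := rfl

lemma one_def : (1 : Heisenberg K) = ((0 : K), (0 : K), (0 : K)) := rfl

lemma inv_def (a : Heisenberg K) : a⁻¹ = (-a.1, -a.2.1, -a.2.2 + a.1 * a.2.1) := rfl

instance : Group (Heisenberg K) where
  mul := (· * ·)
  one := 1
  inv := (·⁻¹)
  mul_assoc a b c := by
    show (a * b) * c = a * (b * c)
    rw [mul_def, mul_def, mul_def, mul_def]
    refine Prod.ext ?_ (Prod.ext ?_ ?_) <;> dsimp only <;> ring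
  one_mul a := by
    show 1 * a = a
    rw [mul_def, one_def]
    refine Prod.ext ?_ (Prod.ext ?_ ?_) <;> dsimp only <;> ring
  mul_one a := by
    show a * 1 = a
    rw [mul_def, one_def]
    refine Prod.ext ?_ (Prod.ext ?_ ?_) <;> dsimp only <;> ring
  inv_mul_cancel a := by
    show a⁻¹ * a = 1
    rw [mul_def, one_def, inv_def]
    refine Prod.ext ?_ (Prod.ext ?_ ?_) <;> dsimp only <;> ring

instance [Finite K] : Finite (Heisenberg K) := inferInstanceAs (Finite (K × K × K))

end Heisenberg

/-!
Every normal subgroup of `H` either lies in the centre `Z = H' = {(0, 0, γ)}` or contains it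
(commutators with a non-central element already sweep out `Z`), and the subgroups of `Z` are the
`{(0, 0, γ) : γ ∈ W}` for additive subgroups `W ≤ K`. With `N = {(0, 0, γ) : γ ∈ V}`, where `V`
has index `p²` in `K`, the proper quotients of `H/N` are therefore the quotients of `H` by the
normal subgroups containing `Z`, which do not depend on `N`, together with the quotients by the
subgroups coming from the index-`p` subgroups `W ⊇ V`. All of the latter quotients are
isomorphic: an index-`p` subgroup is the kernel of an `𝔽_p`-linear functional, every functional
is `x ↦ φ (l * x)` for a fixed nonzero `φ`, so the automorphisms `(α, β, γ) ↦ (l α, β, l γ)` move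
any one of them to any other. Finally, the number of index-`p` subgroups above `V` only depends
on `K/V ≅ 𝔽_p²`.
-/

namespace Subgroup

variable {G H : Type*} [Group G] [Group H] (Q : Type*) [Group Q]

def HasQuotient (M : Subgroup G) : Prop := ∃ _ : M.Normal, Nonempty (G ⧸ M ≃* Q)

variable {Q}

noncomputable def quotientComapMulEquiv {f : G →* H} (hf : Function.Surjective f)
    (A : Subgroup H) [A.Normal] : G ⧸ A.comap f ≃* H ⧸ A :=
  (QuotientGroup.quotientMulEquivOfEq (by rw [← MonoidHom.comap_ker, QuotientGroup.ker_mk'])).trans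
    (QuotientGroup.quotientKerEquivOfSurjective ((QuotientGroup.mk' A).comp f)
      ((QuotientGroup.mk'_surjective A).comp hf))

theorem hasQuotient_comap_iff {f : G →* H} (hf : Function.Surjective f) {A : Subgroup H} :
    (A.comap f).HasQuotient Q ↔ A.HasQuotient Q := by
  constructor
  · rintro ⟨hM, ⟨e⟩⟩
    have : A.Normal := map_comap_eq_self_of_surjective hf A ▸ hM.map f hf
    exact ⟨this, ⟨(quotientComapMulEquiv hf A).symm.trans e⟩⟩
  · rintro ⟨hA, ⟨e⟩⟩
    exact ⟨hA.comap f, ⟨(quotientComapMulEquiv hf A).trans e⟩⟩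

theorem card_ne_bot_hasQuotient_eq_card_gt (N : Subgroup G) [N.Normal] :
    Nat.card {A : Subgroup (G ⧸ N) // A ≠ ⊥ ∧ A.HasQuotient Q} =
      Nat.card {M : Subgroup G // N < M ∧ M.HasQuotient Q} := by
  let e := QuotientGroup.comapMk'OrderIso N
  refine Nat.card_congr ((e.toEquiv.subtypeEquiv fun A => ?_).trans
    ((Equiv.subtypeSubtypeEquivSubtypeInter _ (fun M => N ≠ M ∧ M.HasQuotient Q)).trans
      (Equiv.subtypeEquivRight fun M => by rw [lt_iff_le_and_ne, and_assoc])))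
  have hbot : A = ⊥ ↔ N = (e A).1 := by
    rw [← e.injective.eq_iff, Subtype.ext_iff, eq_comm,
      show (e ⊥).1 = N from (MonoidHom.comap_bot _).trans (QuotientGroup.ker_mk' N)]
  exact and_congr (not_congr hbot) (hasQuotient_comap_iff (QuotientGroup.mk'_surjective N)).symm

end Subgroup

theorem Module.Dual.exists_apply_eq_apply_mul {F K : Type*} [Field F] [Field K] [Algebra F K]
    [FiniteDimensional F K] {φ : Module.Dual F K} (hφ : φ ≠ 0) (ψ : Module.Dual F K) :
    ∃ l : K, ∀ x, ψ x = φ (l * x) := by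
  let L : K →ₗ[F] Module.Dual F K := (LinearMap.mul F K).compr₂ φ
  have hL : Function.Injective L := by
    refine (injective_iff_map_eq_zero L).2 fun l hl => by_contra fun hl₀ => hφ ?_
    ext x
    simpa [L, hl₀] using LinearMap.congr_fun hl (l⁻¹ * x)
  obtain ⟨l, rfl⟩ := (LinearMap.injective_iff_surjective_of_finrank_eq_finrank
    Subspace.dual_finrank_eq.symm).1 hL ψ
  exact ⟨l, fun x => rfl⟩

section ElementaryAbelian

variable {p : ℕ} [Fact p.Prime]

theorem nonempty_linearEquiv_of_card_eq {B₁ B₂ : Type*} [AddCommGroup B₁] [AddCommGroup B₂]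
    [Module (ZMod p) B₁] [Module (ZMod p) B₂] [Finite B₁] [Finite B₂]
    (h : Nat.card B₁ = Nat.card B₂) : Nonempty (B₁ ≃ₗ[ZMod p] B₂) := by
  rw [Module.natCard_eq_pow_finrank (K := ZMod p), Module.natCard_eq_pow_finrank (K := ZMod p)
    (V := B₂), Nat.card_zmod] at h
  exact ⟨.ofFinrankEq _ _ (Nat.pow_right_injective (Fact.out : p.Prime).two_le h)⟩

namespace AddSubgroup

theorem exists_dual_mem_iff_of_index_eq {A : Type*} [AddCommGroup A] [Module (ZMod p) A]
    {W : AddSubgroup A} (hW : W.index = p) :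
    ∃ φ : Module.Dual (ZMod p) A, φ ≠ 0 ∧ ∀ x, x ∈ W ↔ φ x = 0 := by
  let e : A ⧸ W ≃+ ZMod p := addEquivOfPrimeCardEq hW (Nat.card_zmod p)
  let φ := ((e : A ⧸ W →+ ZMod p).comp (QuotientAddGroup.mk' W)).toZModLinearMap p
  have hmem (x : A) : x ∈ W ↔ φ x = 0 := by
    simp [φ, QuotientAddGroup.eq_zero_iff]
  refine ⟨φ, fun hφ => ?_, hmem⟩
  have : W = ⊤ := eq_top_iff.2 fun x _ => (hmem x).2 (by simp [hφ])
  exact (Fact.out : p.Prime).one_lt.ne' (hW.symm.trans (index_eq_one.2 this))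

variable {A : Type*} [AddCommGroup A] [Finite A]

theorem lt_and_lt_top_iff_le_and_index_eq {V W : AddSubgroup A} (hV : V.index = p ^ 2) :
    V < W ∧ W < ⊤ ↔ V ≤ W ∧ W.index = p := by
  have hp : p.Prime := Fact.out
  constructor
  · rintro ⟨hVW, hW⟩
    obtain ⟨k, hk, hWk⟩ := (Nat.dvd_prime_pow hp).1 (hV ▸ index_dvd_of_le hVW.le)
    have h₁ : W.index ≠ 1 := index_eq_one.not.2 hW.ne
    have h₂ : W.index < p ^ 2 := hV ▸ index_strictAnti hVW
    refine ⟨hVW.le, ?_⟩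
    interval_cases k <;> simp_all
  · rintro ⟨hVW, hW⟩
    refine ⟨lt_of_le_of_ne hVW ?_, lt_top_iff_ne_top.2 ?_⟩
    · rintro rfl
      have := hp.one_lt
      nlinarith
    · rintro rfl
      exact hp.one_lt.ne (index_top.symm.trans hW)

theorem nonempty_equiv_le_and_index_eq (hA : ∀ x : A, p • x = 0) {V₁ V₂ : AddSubgroup A}
    (hV : V₁.index = V₂.index) (n : ℕ) :
    Nonempty ({W // V₁ ≤ W ∧ W.index = n} ≃ {W // V₂ ≤ W ∧ W.index = n}) := by
  have ofQuotient (V : AddSubgroup A) :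
      {S : AddSubgroup (A ⧸ V) // S.index = n} ≃ {W // V ≤ W ∧ W.index = n} :=
    ((QuotientAddGroup.comapMk'OrderIso V).toEquiv.subtypeEquiv fun S => by
      simp [QuotientAddGroup.comapMk'OrderIso,
        index_comap_of_surjective _ (QuotientAddGroup.mk'_surjective V)]).trans
      (Equiv.subtypeSubtypeEquivSubtypeInter _ (fun W : AddSubgroup A => W.index = n))
  let := QuotientAddGroup.zmodModule (H := V₁) fun x => hA x ▸ V₁.zero_mem
  let := QuotientAddGroup.zmodModule (H := V₂) fun x => hA x ▸ V₂.zero_mem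
  obtain ⟨e⟩ := nonempty_linearEquiv_of_card_eq (p := p) hV
  exact ⟨(ofQuotient V₁).symm.trans ((e.toAddEquiv.mapAddSubgroup.toEquiv.subtypeEquiv fun S => by
    simp [index_map_equiv]).trans (ofQuotient V₂))⟩

theorem card_le_and_index_eq_and_congr (hA : ∀ x : A, p • x = 0) {V₁ V₂ : AddSubgroup A}
    (hV : V₁.index = V₂.index) {n : ℕ} {R : AddSubgroup A → Prop}
    (hR : ∀ W W' : AddSubgroup A, W.index = n → W'.index = n → (R W ↔ R W')) :
    Nat.card {W // V₁ ≤ W ∧ W.index = n ∧ R W} = Nat.card {W // V₂ ≤ W ∧ W.index = n ∧ R W} := by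
  obtain ⟨E⟩ := nonempty_equiv_le_and_index_eq hA hV n
  let assoc (V : AddSubgroup A) :
      {W // V ≤ W ∧ W.index = n ∧ R W} ≃ {W : {W // V ≤ W ∧ W.index = n} // R W.1} :=
    (Equiv.subtypeEquivRight fun _ => and_assoc.symm).trans
      (Equiv.subtypeSubtypeEquivSubtypeInter _ R).symm
  exact Nat.card_congr ((assoc V₁).trans
    ((E.subtypeEquiv fun W => hR _ _ W.2.2 (E W).2.2).trans (assoc V₂).symm))

end AddSubgroup

theorem exists_mul_mem_iff_of_index_eq {K : Type*} [Field K] [Finite K] [CharP K p]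
    {W₁ W₂ : AddSubgroup K} (h₁ : W₁.index = p) (h₂ : W₂.index = p) :
    ∃ l : K, l ≠ 0 ∧ ∀ x, x ∈ W₂ ↔ l * x ∈ W₁ := by
  let := ZMod.algebra K p
  obtain ⟨φ₁, hφ₁, hW₁⟩ := W₁.exists_dual_mem_iff_of_index_eq h₁
  obtain ⟨φ₂, hφ₂, hW₂⟩ := W₂.exists_dual_mem_iff_of_index_eq h₂
  obtain ⟨l, hl⟩ := Module.Dual.exists_apply_eq_apply_mul hφ₁ φ₂
  refine ⟨l, fun hl₀ => hφ₂ (LinearMap.ext fun x => by simp [hl, hl₀]), fun x => ?_⟩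
  rw [hW₂, hW₁, hl]

end ElementaryAbelian

open scoped commutatorElement

namespace Heisenberg

variable {K : Type} [Field K]

theorem ext {x y : Heisenberg K} (h₁ : x.1 = y.1) (h₂ : x.2.1 = y.2.1) (h₃ : x.2.2 = y.2.2) :
    x = y :=
  Prod.ext h₁ (Prod.ext h₂ h₃)

@[simp] theorem fst_mul (a b : Heisenberg K) : (a * b).1 = a.1 + b.1 := rfl
@[simp] theorem fst_snd_mul (a b : Heisenberg K) : (a * b).2.1 = a.2.1 + b.2.1 := rfl
@[simp] theorem snd_snd_mul (a b : Heisenberg K) : (a * b).2.2 = a.2.2 + b.2.2 + a.1 * b.2.1 := rfl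
@[simp] theorem fst_inv (a : Heisenberg K) : a⁻¹.1 = -a.1 := rfl
@[simp] theorem fst_snd_inv (a : Heisenberg K) : a⁻¹.2.1 = -a.2.1 := rfl
@[simp] theorem snd_snd_inv (a : Heisenberg K) : a⁻¹.2.2 = -a.2.2 + a.1 * a.2.1 := rfl

def centralEmbedding : Multiplicative K →* Heisenberg K where
  toFun γ := (0, 0, γ.toAdd)
  map_one' := rfl
  map_mul' a b := ext (add_zero 0).symm (add_zero 0).symm <| by
    show a.toAdd + b.toAdd = a.toAdd + b.toAdd + 0 * 0
    rw [mul_zero, add_zero]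

@[simp] theorem fst_centralEmbedding (γ : Multiplicative K) : (centralEmbedding γ).1 = 0 := rfl
@[simp] theorem fst_snd_centralEmbedding (γ : Multiplicative K) :
    (centralEmbedding γ).2.1 = 0 := rfl
@[simp] theorem snd_snd_centralEmbedding (γ : Multiplicative K) :
    (centralEmbedding γ).2.2 = γ.toAdd := rfl

theorem centralEmbedding_injective : Function.Injective (centralEmbedding (K := K)) :=
  fun _ _ h => congrArg (fun x : Heisenberg K => Multiplicative.ofAdd x.2.2) h

theorem commutatorElement_eq (a b : Heisenberg K) :
    ⁅a, b⁆ = centralEmbedding (.ofAdd (a.1 * b.2.1 - b.1 * a.2.1)) := by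
  rw [commutatorElement_def]
  refine ext ?_ ?_ ?_ <;> simp only [fst_mul, fst_snd_mul, snd_snd_mul, fst_inv, fst_snd_inv,
    snd_snd_inv, fst_centralEmbedding, fst_snd_centralEmbedding, snd_snd_centralEmbedding,
    toAdd_ofAdd] <;> ring

def centralSubgroup : AddSubgroup K ↪o Subgroup (Heisenberg K) :=
  OrderEmbedding.ofMapLEIff (fun W => W.toSubgroup.map centralEmbedding) fun _ _ => by
    rw [Subgroup.map_le_map_iff_of_injective centralEmbedding_injective, OrderIso.le_iff_le]

theorem mem_centralSubgroup {W : AddSubgroup K} {x : Heisenberg K} :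
    x ∈ centralSubgroup W ↔ x.1 = 0 ∧ x.2.1 = 0 ∧ x.2.2 ∈ W := by
  simp only [centralSubgroup, OrderEmbedding.coe_ofMapLEIff, Subgroup.mem_map]
  constructor
  · rintro ⟨γ, hγ, rfl⟩
    exact ⟨rfl, rfl, hγ⟩
  · rintro ⟨h₁, h₂, h₃⟩
    exact ⟨Multiplicative.ofAdd x.2.2, h₃, ext h₁.symm h₂.symm rfl⟩

theorem commutator_le_centralSubgroup_top : commutator (Heisenberg K) ≤ centralSubgroup ⊤ := by
  rw [commutator_def, Subgroup.commutator_le]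
  intro a _ b _
  rw [commutatorElement_eq, mem_centralSubgroup]
  exact ⟨rfl, rfl, trivial⟩

theorem le_centralSubgroup_top_or_centralSubgroup_top_le (M : Subgroup (Heisenberg K))
    [M.Normal] : M ≤ centralSubgroup ⊤ ∨ centralSubgroup ⊤ ≤ M := by
  refine or_iff_not_imp_left.2 fun h => ?_
  obtain ⟨x, hxM, hx⟩ := SetLike.not_le_iff_exists.1 h
  intro z hz
  obtain ⟨hz₁, hz₂, -⟩ := mem_centralSubgroup.1 hz
  obtain ⟨y, hy⟩ : ∃ y : Heisenberg K, x.1 * y.2.1 - y.1 * x.2.1 = z.2.2 := by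
    by_cases hx₁ : x.1 = 0
    · have hx₂ : x.2.1 ≠ 0 := fun hx₂ => hx (mem_centralSubgroup.2 ⟨hx₁, hx₂, trivial⟩)
      exact ⟨(-z.2.2 / x.2.1, 0, 0), by field_simp; ring⟩
    · exact ⟨(0, z.2.2 / x.1, 0), by field_simp; ring⟩
  have hz : ⁅x, y⁆ = z := by
    rw [commutatorElement_eq, hy]
    exact ext hz₁.symm hz₂.symm rfl
  exact hz ▸ Subgroup.commutator_le_left M ⊤ (Subgroup.commutator_mem_commutator hxM trivial)

theorem exists_centralSubgroup_eq_of_le {M : Subgroup (Heisenberg K)}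
    (h : M ≤ centralSubgroup ⊤) : ∃ W, centralSubgroup W = M := by
  refine ⟨AddSubgroup.toSubgroup.symm (M.comap centralEmbedding), ?_⟩
  simp only [centralSubgroup, OrderEmbedding.coe_ofMapLEIff, OrderIso.apply_symm_apply]
  refine Subgroup.map_comap_eq_self (h.trans ?_)
  simp [centralSubgroup, MonoidHom.range_eq_map]

theorem index_centralSubgroup [Finite K] (W : AddSubgroup K) :
    (centralSubgroup W).index = W.index * Nat.card K ^ 2 := by
  have hH : Nat.card (Heisenberg K) = Nat.card K ^ 3 := by
    rw [show Nat.card (Heisenberg K) = Nat.card (K × K × K) from rfl, Nat.card_prod, Nat.card_prod]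
    ring
  have hW : Nat.card (centralSubgroup W) = Nat.card W :=
    (Subgroup.card_map_of_injective centralEmbedding_injective).trans rfl
  refine Nat.eq_of_mul_eq_mul_left (Nat.card_pos (α := W)) ?_
  rw [← mul_assoc, W.card_mul_index, ← hW, Subgroup.card_mul_index, hH]
  ring

def scale (l : K) : Heisenberg K →* Heisenberg K where
  toFun x := (l * x.1, x.2.1, l * x.2.2)
  map_one' := ext (mul_zero l) rfl (mul_zero l)
  map_mul' x y := ext (mul_add l _ _) rfl <| by
    show l * (x.2.2 + y.2.2 + x.1 * y.2.1) = l * x.2.2 + l * y.2.2 + l * x.1 * y.2.1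
    ring

theorem scale_surjective {l : K} (hl : l ≠ 0) : Function.Surjective (scale l) := fun y =>
  ⟨(l⁻¹ * y.1, y.2.1, l⁻¹ * y.2.2), ext (mul_inv_cancel_left₀ hl _) rfl (mul_inv_cancel_left₀ hl _)⟩

theorem comap_scale_centralSubgroup {l : K} (hl : l ≠ 0) {W₁ W₂ : AddSubgroup K}
    (h : ∀ x, x ∈ W₂ ↔ l * x ∈ W₁) :
    (centralSubgroup W₁).comap (scale l) = centralSubgroup W₂ := by
  ext x
  simp only [Subgroup.mem_comap, mem_centralSubgroup, h]
  exact and_congr (mul_eq_zero_iff_left hl) Iff.rfl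

variable {p : ℕ} [Fact p.Prime] {Q : Type*} [Group Q]

theorem exists_centralSubgroup_eq_and_index_eq [Fintype K] {e : ℕ} (hK : Fintype.card K = p ^ e)
    {N : Subgroup (Heisenberg K)} (hN : N ≤ commutator (Heisenberg K))
    (hi : N.index = p ^ (2 * e + 2)) : ∃ V, centralSubgroup V = N ∧ V.index = p ^ 2 := by
  obtain ⟨V, rfl⟩ := exists_centralSubgroup_eq_of_le (hN.trans commutator_le_centralSubgroup_top)
  refine ⟨V, rfl, Nat.eq_of_mul_eq_mul_right (pow_pos (Fact.out : p.Prime).pos (2 * e)) ?_⟩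
  calc V.index * p ^ (2 * e) = (centralSubgroup V).index := by
        rw [index_centralSubgroup, Nat.card_eq_fintype_card, hK, ← pow_mul, mul_comm e]
    _ = p ^ 2 * p ^ (2 * e) := by rw [hi]; ring

theorem hasQuotient_centralSubgroup_iff [Finite K] [CharP K p] {W₁ W₂ : AddSubgroup K}
    (h₁ : W₁.index = p) (h₂ : W₂.index = p) :
    (centralSubgroup W₁).HasQuotient Q ↔ (centralSubgroup W₂).HasQuotient Q := by
  obtain ⟨l, hl, hmem⟩ := exists_mul_mem_iff_of_index_eq h₁ h₂
  rw [← Subgroup.hasQuotient_comap_iff (scale_surjective hl), comap_scale_centralSubgroup hl hmem]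

theorem centralSubgroup_lt_and_not_top_le_iff [Finite K] {V : AddSubgroup K}
    (hV : V.index = p ^ 2) (W : AddSubgroup K) :
    centralSubgroup V < centralSubgroup W ∧ ¬centralSubgroup ⊤ ≤ centralSubgroup W ↔
      V ≤ W ∧ W.index = p := by
  rw [centralSubgroup.lt_iff_lt, centralSubgroup.le_iff_le, top_le_iff, ← ne_eq,
    ← lt_top_iff_ne_top]
  exact AddSubgroup.lt_and_lt_top_iff_le_and_index_eq hV

theorem card_gt_centralSubgroup_hasQuotient_eq_add [Finite K] {V : AddSubgroup K}
    (hV : V.index = p ^ 2) :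
    Nat.card {M : Subgroup (Heisenberg K) // centralSubgroup V < M ∧ M.HasQuotient Q} =
      Nat.card {M : Subgroup (Heisenberg K) // centralSubgroup ⊤ ≤ M ∧ M.HasQuotient Q} +
      Nat.card {W : AddSubgroup K // V ≤ W ∧ W.index = p ∧ (centralSubgroup W).HasQuotient Q} := by
  classical
  have hVW := centralSubgroup_lt_and_not_top_le_iff hV
  have hVtop : centralSubgroup V < centralSubgroup ⊤ := by
    rw [centralSubgroup.lt_iff_lt, lt_top_iff_ne_top, Ne, ← AddSubgroup.index_eq_one, hV]
    exact (one_lt_pow₀ (Fact.out : p.Prime).one_lt two_ne_zero).ne'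
  let P (M : Subgroup (Heisenberg K)) := centralSubgroup V < M ∧ M.HasQuotient Q
  let above : {M : Subtype P // centralSubgroup ⊤ ≤ M.1} ≃
      {M // centralSubgroup ⊤ ≤ M ∧ M.HasQuotient Q} :=
    (Equiv.subtypeSubtypeEquivSubtypeInter P _).trans (Equiv.subtypeEquivRight fun M =>
      ⟨fun ⟨⟨_, hM⟩, hZ⟩ => ⟨hZ, hM⟩, fun ⟨hZ, hM⟩ => ⟨⟨hVtop.trans_le hZ, hM⟩, hZ⟩⟩)
  let toBelow (W : {W : AddSubgroup K // V ≤ W ∧ W.index = p ∧ (centralSubgroup W).HasQuotient Q}) :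
      {M // P M ∧ ¬centralSubgroup ⊤ ≤ M} :=
    ⟨centralSubgroup W, ⟨((hVW W).2 ⟨W.2.1, W.2.2.1⟩).1, W.2.2.2⟩, ((hVW W).2 ⟨W.2.1, W.2.2.1⟩).2⟩
  have hbij : Function.Bijective toBelow := by
    refine ⟨fun W W' h => Subtype.ext (centralSubgroup.injective (congrArg Subtype.val h)), ?_⟩
    rintro ⟨M, ⟨hVM, hM⟩, hZ⟩
    have := hM.1
    obtain ⟨W, rfl⟩ := exists_centralSubgroup_eq_of_le
      ((le_centralSubgroup_top_or_centralSubgroup_top_le M).resolve_right hZ)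
    obtain ⟨hVW', hW⟩ := (hVW W).1 ⟨hVM, hZ⟩
    exact ⟨⟨W, hVW', hW, hM⟩, rfl⟩
  let below : {M : Subtype P // ¬centralSubgroup ⊤ ≤ M.1} ≃ _ :=
    (Equiv.subtypeSubtypeEquivSubtypeInter P _).trans (Equiv.ofBijective toBelow hbij).symm
  rw [← Nat.card_sum]
  exact Nat.card_congr ((Equiv.sumCompl _).symm.trans (above.sumCongr below))

end Heisenberg

theorem heisenberg_quotients_same_quotient_profile_general
    (p e : ℕ) (hp : p.Prime) (K : Type) [Field K] [Fintype K] (hK : Fintype.card K = p ^ e)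
    (N₁ N₂ : Subgroup (Heisenberg K)) [N₁.Normal] [N₂.Normal]
    (hN₁ : N₁ ≤ commutator (Heisenberg K)) (hN₂ : N₂ ≤ commutator (Heisenberg K))
    (hi₁ : N₁.index = p ^ (2 * e + 2)) (hi₂ : N₂.index = p ^ (2 * e + 2))
    (Q : Type) [Group Q] :
    Nat.card {A : Subgroup (Heisenberg K ⧸ N₁) //
        A ≠ ⊥ ∧ ∃ hA : A.Normal, Nonempty ((Heisenberg K ⧸ N₁) ⧸ A ≃* Q)} =
    Nat.card {A : Subgroup (Heisenberg K ⧸ N₂) //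
        A ≠ ⊥ ∧ ∃ hA : A.Normal, Nonempty ((Heisenberg K ⧸ N₂) ⧸ A ≃* Q)} := by
  have : Fact p.Prime := ⟨hp⟩
  have : CharP K p := charP_of_card_eq_prime_pow hK
  have hpK (x : K) : p • x = 0 := by rw [nsmul_eq_mul, CharP.cast_eq_zero, zero_mul]
  obtain ⟨V₁, rfl, hV₁⟩ := Heisenberg.exists_centralSubgroup_eq_and_index_eq hK hN₁ hi₁
  obtain ⟨V₂, rfl, hV₂⟩ := Heisenberg.exists_centralSubgroup_eq_and_index_eq hK hN₂ hi₂
  refine (Subgroup.card_ne_bot_hasQuotient_eq_card_gt _).trans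
    (.trans ?_ (Subgroup.card_ne_bot_hasQuotient_eq_card_gt _).symm)
  rw [Heisenberg.card_gt_centralSubgroup_hasQuotient_eq_add hV₁,
    Heisenberg.card_gt_centralSubgroup_hasQuotient_eq_add hV₂]
  congr 1
  exact AddSubgroup.card_le_and_index_eq_and_congr hpK (hV₁.trans hV₂.symm)
    fun W W' hW hW' => Heisenberg.hasQuotient_centralSubgroup_iff hW hW'

/-- Any two quotients `H/N₁`, `H/N₂` of the Heisenberg group
`H = H(F_{p^e})` by subgroups `N₁, N₂ ≤ H'` of index `p^(2e+2)` have the same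
quotient-group profile: for every finite group `Q`, the number of nontrivial
normal subgroups `A` of `H/N₁` with `(H/N₁)/A ≅ Q` equals the corresponding
number for `H/N₂`. -/
theorem heisenberg_quotients_same_quotient_profile
    (p e : ℕ) (hp : p.Prime) (he : e.Prime) (hp2 : 2 < p) (he2 : 2 < e)
    (K : Type) [Field K] [Fintype K] (hK : Fintype.card K = p ^ e)
    (N₁ N₂ : Subgroup (Heisenberg K)) [N₁.Normal] [N₂.Normal]
    (hN₁ : N₁ ≤ commutator (Heisenberg K)) (hN₂ : N₂ ≤ commutator (Heisenberg K))
    (hi₁ : N₁.index = p ^ (2 * e + 2)) (hi₂ : N₂.index = p ^ (2 * e + 2))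
    (Q : Type) [Group Q] [Finite Q] :
    Nat.card {A : Subgroup (Heisenberg K ⧸ N₁) //
        A ≠ ⊥ ∧ ∃ hA : A.Normal, Nonempty ((Heisenberg K ⧸ N₁) ⧸ A ≃* Q)} =
    Nat.card {A : Subgroup (Heisenberg K ⧸ N₂) //
        A ≠ ⊥ ∧ ∃ hA : A.Normal, Nonempty ((Heisenberg K ⧸ N₂) ⧸ A ≃* Q)} :=
  heisenberg_quotients_same_quotient_profile_general p e hp K hK N₁ N₂ hN₁ hN₂ hi₁ hi₂ Q
end

section
/- Let p be a prime and G a finite p-group having a maximal subgroup M such that d(G) = 1 + d(M). Then the Frattini subgroups coincide: Φ(G) = Φ(M). -/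
/-!
Burnside's basis theorem gives `|G : Φ(G)| = p ^ d(G)` for every finite `p`-group `G`: the
Frattini quotient is elementary abelian, so its order divides `p ^ d`, while a generating set can
be built greedily, each new generator multiplying the order of the generated subgroup by at
least `p`. As `M` is normal of index `p`, this yields
`p ^ (1 + d(M)) |Φ(G)| = |G| = p |M| = p ^ (1 + d(M)) |Φ(M)|`.
Moreover `Φ(M) ≤ Φ(G)` for any normal subgroup `M` of a finite group: `Φ(M)` is normal in `G`, so
if it escaped a maximal subgroup `K` then `G = K Φ(M)`, hence `M = (M ∩ K) Φ(M)` and `M ≤ K` by the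
non-generating property of `Φ(M)`. An inclusion of subgroups of the same order is an equality.
-/

open Subgroup

section Frattini

variable {G : Type*} [Group G]

lemma mem_frattini_iff {x : G} : x ∈ frattini G ↔ ∀ K : Subgroup G, IsCoatom K → x ∈ K := by
  simp only [frattini, Order.radical, mem_iInf, Set.mem_ofPred_eq]

lemma le_frattini_iff {H : Subgroup G} :
    H ≤ frattini G ↔ ∀ K : Subgroup G, IsCoatom K → H ≤ K :=
  ⟨fun h _ hK => h.trans (frattini_le_coatom hK), fun h => le_iInf₂ h⟩

lemma Group.rank_quotient_frattini [Finite G] : Group.rank (G ⧸ frattini G) = Group.rank G := by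
  classical
  refine le_antisymm (Group.rank_le_of_surjective _ (QuotientGroup.mk'_surjective _)) ?_
  obtain ⟨S, hS_card, hS⟩ := Group.rank_spec (G ⧸ frattini G)
  set T : Finset G := S.image Quotient.out
  have hT : closure (T : Set G) = ⊤ := by
    apply frattini_nongenerating
    have h := comap_map_eq (QuotientGroup.mk' (frattini G)) (closure T)
    rw [QuotientGroup.ker_mk', MonoidHom.map_closure, Finset.coe_image, Set.image_image] at h
    simpa [QuotientGroup.out_eq', hS, T] using h.symm
  exact (Group.rank_le hT).trans (Finset.card_image_le.trans hS_card.le)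

lemma Subgroup.Normal.map_subtype_frattini_le [Finite G] {N : Subgroup G} (hN : N.Normal) :
    (frattini N).map N.subtype ≤ frattini G := by
  rw [le_frattini_iff]
  intro K hK
  by_contra hFK
  have hsup : K ⊔ (frattini N).map N.subtype = ⊤ := hK.2 _ (left_lt_sup.mpr hFK)
  have hNK : K.subgroupOf N = ⊤ := by
    refine frattini_nongenerating (eq_top_iff.mpr fun n _ => ?_)
    obtain ⟨k, hk, _, ⟨f, hf, rfl⟩, hkf⟩ := mem_sup_of_normal_right.mp (hsup ▸ mem_top (n : G))
    rw [show n = (n * f⁻¹) * f by group]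
    refine mul_mem_sup ?_ hf
    rw [mem_subgroupOf]
    simpa [← hkf] using hk
  exact hFK ((map_subtype_le _).trans (subgroupOf_eq_top.mp hNK))

end Frattini

namespace IsPGroup

variable {p : ℕ} [hp : Fact p.Prime] {G : Type*} [Group G] [Finite G]

lemma mul_card_le_card_of_lt (hG : IsPGroup p G) {H K : Subgroup G} (h : H < K) :
    p * Nat.card H ≤ Nat.card K := by
  obtain ⟨k, hk⟩ := (hG.to_subgroup K).index (H.subgroupOf K)
  have hk0 : k ≠ 0 := by
    rintro rfl
    exact h.not_ge (relIndex_eq_one.mp hk)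
  calc p * Nat.card H ≤ Nat.card H * H.relIndex K := by
        rw [mul_comm, relIndex, hk]
        exact Nat.mul_le_mul_left _ (Nat.le_self_pow hk0 p)
    _ = Nat.card K := by
        rw [← relIndex_bot_left, ← relIndex_bot_left, relIndex_mul_relIndex ⊥ H K bot_le h.le]

lemma exists_closure_sup_eq_top_pow_card_mul_card_le (hG : IsPGroup p G) (H : Subgroup G) :
    ∃ S : Finset G, closure (S : Set G) ⊔ H = ⊤ ∧ p ^ S.card * Nat.card H ≤ Nat.card G := by
  classical
  induction H using WellFoundedGT.induction with
  | ind H ih =>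
  by_cases hH : H = ⊤
  · exact ⟨∅, by simp [hH], by simp [hH]⟩
  obtain ⟨g, -, hg⟩ := SetLike.exists_of_lt (lt_top_iff_ne_top.mpr hH)
  have hlt : H < H ⊔ zpowers g := left_lt_sup.mpr (zpowers_le.not.mpr hg)
  obtain ⟨S, hS_top, hS_card⟩ := ih _ hlt
  refine ⟨insert g S, ?_, ?_⟩
  · rw [Finset.coe_insert, Set.insert_eq, Subgroup.closure_union, ← zpowers_eq_closure, ← hS_top]
    ac_rfl
  · calc p ^ (insert g S).card * Nat.card H ≤ p ^ S.card * (p * Nat.card H) := by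
          rw [← mul_assoc, ← pow_succ]
          gcongr
          · exact hp.out.one_lt.le
          · exact Finset.card_insert_le g S
      _ ≤ p ^ S.card * Nat.card ↥(H ⊔ zpowers g) := by
          gcongr
          exact hG.mul_card_le_card_of_lt hlt
      _ ≤ Nat.card G := hS_card

lemma pow_rank_le_card (hG : IsPGroup p G) : p ^ Group.rank G ≤ Nat.card G := by
  obtain ⟨S, hS_top, hS_card⟩ := hG.exists_closure_sup_eq_top_pow_card_mul_card_le ⊥
  rw [sup_bot_eq] at hS_top
  calc p ^ Group.rank G ≤ p ^ S.card := Nat.pow_le_pow_right hp.out.pos (Group.rank_le hS_top)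
    _ ≤ Nat.card G := by simpa using hS_card

lemma index_eq_of_isCoatom (hG : IsPGroup p G) {K : Subgroup G} (hK : IsCoatom K) :
    K.index = p := by
  obtain ⟨n, hn⟩ := (hG.to_subgroup K).exists_card_eq
  obtain ⟨k, hk⟩ := hG.index K
  have hk0 : k ≠ 0 := by
    rintro rfl
    exact hK.1 (index_eq_one.mp hk)
  obtain ⟨L, hL, hKL⟩ := Sylow.exists_subgroup_card_pow_succ (p := p)
    (by rw [← K.card_mul_index, hn, hk, pow_succ]; exact mul_dvd_mul_left _ (dvd_pow_self p hk0))
    hn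
  have hLK : L ≠ K := by
    rintro rfl
    exact (Nat.pow_right_injective hp.out.two_le).ne n.succ_ne_self (hL.symm.trans hn)
  have hL_top : L = ⊤ := hK.2 L (lt_of_le_of_ne hKL hLK.symm)
  rw [hL_top, card_top] at hL
  have hcard := K.card_mul_index
  rw [hL, hn, pow_succ] at hcard
  exact Nat.eq_of_mul_eq_mul_left (pow_pos hp.out.pos n) hcard

lemma normal_of_isCoatom (hG : IsPGroup p G) {K : Subgroup G} (hK : IsCoatom K) : K.Normal :=
  have := hG.isNilpotent
  NormalizerCondition.normal_of_coatom K Group.normalizerCondition_of_isNilpotent hK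

lemma commutator_le_frattini (hG : IsPGroup p G) : commutator G ≤ frattini G := by
  rw [le_frattini_iff]
  intro K hK
  have := hG.normal_of_isCoatom hK
  have : IsCyclic (G ⧸ K) := isCyclic_of_prime_card (p := p)
    (by rw [← index_eq_card, hG.index_eq_of_isCoatom hK])
  exact Normal.quotient_commutative_iff_commutator_le.mp inferInstance

lemma pow_mem_frattini (hG : IsPGroup p G) (x : G) : x ^ p ∈ frattini G := by
  rw [mem_frattini_iff]
  intro K hK
  have := hG.normal_of_isCoatom hK
  simpa [hG.index_eq_of_isCoatom hK] using K.pow_index_mem x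

open scoped IsMulCommutative in
theorem card_quotient_frattini (hG : IsPGroup p G) :
    Nat.card (G ⧸ frattini G) = p ^ Group.rank G := by
  have : IsMulCommutative (G ⧸ frattini G) :=
    Normal.quotient_commutative_iff_commutator_le.mpr hG.commutator_le_frattini
  have hpow : ∀ x : G ⧸ frattini G, x ^ p = 1 := by
    rintro ⟨x⟩
    exact (QuotientGroup.eq_one_iff _).mpr (hG.pow_mem_frattini x)
  rw [← Group.rank_quotient_frattini]
  exact le_antisymm (Nat.le_of_dvd (pow_pos hp.out.pos _) (card_dvd_exponent_pow_rank' _ hpow))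
    (hG.to_quotient _).pow_rank_le_card

end IsPGroup

/-- If a finite `p`-group `G` has a maximal subgroup `M` with
`d(G) = 1 + d(M)`, then the Frattini subgroups of `G` and of `M` coincide
(the Frattini subgroup of `M`, viewed inside `G`, equals that of `G`). -/
theorem frattini_eq_frattini_of_maximal_rank
    (p : ℕ) (hp : p.Prime) (G : Type) [Group G] [Finite G] (hpG : IsPGroup p G)
    (M : Subgroup G) (hM : IsCoatom M)
    (hd : Group.rank G = 1 + Group.rank ↥M) :
    Subgroup.map M.subtype (frattini ↥M) = frattini G := by
  have : Fact p.Prime := ⟨hp⟩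
  refine eq_of_le_of_card_ge (hpG.normal_of_isCoatom hM).map_subtype_frattini_le ?_
  rw [card_map_of_injective M.subtype_injective]
  have hG := card_eq_card_quotient_mul_card_subgroup (frattini G)
  have hM' := card_eq_card_quotient_mul_card_subgroup (frattini M)
  rw [hpG.card_quotient_frattini, hd] at hG
  rw [(hpG.to_subgroup M).card_quotient_frattini] at hM'
  have hGM := M.card_mul_index
  rw [hpG.index_eq_of_isCoatom hM, hM', hG] at hGM
  refine (Nat.eq_of_mul_eq_mul_left (pow_pos hp.pos (1 + Group.rank M)) ?_).le
  rw [← hGM, pow_add]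
  ring
end

section
/- Let p > 2 be prime, let e ≥ 2, and let a(t) be a monic polynomial of degree e over Z_p with companion matrix C(a(t)). Set G = B(I_e, C(a(t))). Let L = [I_{e−1} | 0] and L' = [0 | I_{e−1}] be the (e−1)×e matrices obtained by deleting the last row of I_e and of C(a(t)) respectively, and set M = B(L, L'). Then the map (a, b, c) ↦ ((a, 0), b, c) is an injective group homomorphism from M into G whose image is a maximal subgroup of G, and d(G) = 1 + d(M). In particular, G has a maximal subgroup whose isomorphism type depends only on p and e, not on a(t). -/
open Matrix in
/-- The Brahana-Baer group `B(L 0, …, L (t-1))` determined by a family of `r × s`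
matrices over `ZMod p`: underlying set `(ZMod p)^r × (ZMod p)^s × (ZMod p)^t` with
multiplication `(a,b,c)·(a',b',c') = (a+a', b+b', c+c'+(a L₁ b'ᵀ, …, a L_t b'ᵀ))`. -/
def BGroup (p r s t : ℕ) (L : Fin t → Matrix (Fin r) (Fin s) (ZMod p)) : Type :=
  (Fin r → ZMod p) × (Fin s → ZMod p) × (Fin t → ZMod p)

namespace BGroup

open Matrix

variable {p r s t : ℕ} {L : Fin t → Matrix (Fin r) (Fin s) (ZMod p)}

instance : Mul (BGroup p r s t L) :=
  ⟨fun x y => (x.1 + y.1, x.2.1 + y.2.1,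
    fun i => x.2.2 i + y.2.2 i + x.1 ⬝ᵥ (L i).mulVec y.2.1)⟩

instance : One (BGroup p r s t L) := ⟨(0, 0, 0)⟩

instance : Inv (BGroup p r s t L) :=
  ⟨fun x => (-x.1, -x.2.1, fun i => -x.2.2 i + x.1 ⬝ᵥ (L i).mulVec x.2.1)⟩

lemma mul_def (x y : BGroup p r s t L) :
    x * y = (x.1 + y.1, x.2.1 + y.2.1,
      fun i => x.2.2 i + y.2.2 i + x.1 ⬝ᵥ (L i).mulVec y.2.1) := rfl

lemma one_def : (1 : BGroup p r s t L) = (0, 0, 0) := rfl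

lemma inv_def (x : BGroup p r s t L) :
    x⁻¹ = (-x.1, -x.2.1, fun i => -x.2.2 i + x.1 ⬝ᵥ (L i).mulVec x.2.1) := rfl

instance : Group (BGroup p r s t L) where
  mul := (· * ·)
  one := 1
  inv := (·⁻¹)
  mul_assoc x y z := by
    show (x * y) * z = x * (y * z)
    rw [mul_def, mul_def, mul_def, mul_def]
    refine Prod.ext ?_ (Prod.ext ?_ ?_) <;> dsimp
    · abel
    · abel
    · funext i
      simp [Matrix.mulVec_add, dotProduct_add, add_dotProduct]
      ring
  one_mul x := by
    show 1 * x = x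
    rw [mul_def, one_def]
    refine Prod.ext ?_ (Prod.ext ?_ ?_) <;> dsimp
    · abel
    · abel
    · funext i
      simp [zero_dotProduct]
  mul_one x := by
    show x * 1 = x
    rw [mul_def, one_def]
    refine Prod.ext ?_ (Prod.ext ?_ ?_) <;> dsimp
    · abel
    · abel
    · funext i
      simp [Matrix.mulVec_zero]
  inv_mul_cancel x := by
    show x⁻¹ * x = 1
    rw [mul_def, inv_def, one_def]
    refine Prod.ext ?_ (Prod.ext ?_ ?_) <;> dsimp
    · abel
    · abel
    · funext i
      simp [neg_dotProduct]

instance [NeZero p] : Finite (BGroup p r s t L) :=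
  inferInstanceAs (Finite (_ × _ × _))

end BGroup

/-- The companion-type matrix of a (monic) polynomial `a` of degree `e`:
entries `1` in positions `(i, i+1)` for the first `e-1` rows, bottom row
`(a_0, …, a_{e-1})`, and `0` elsewhere. -/
def companionMx (p e : ℕ) (a : Polynomial (ZMod p)) : Matrix (Fin e) (Fin e) (ZMod p) :=
  Matrix.of fun i j =>
    if (i : ℕ) + 1 = e then a.coeff (j : ℕ)
    else if (i : ℕ) + 1 = (j : ℕ) then 1 else 0

/-- The `(e-1) × e` matrix `[I_{e-1} | 0]` obtained by deleting the last row of `I_e`. -/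
def truncId (p e : ℕ) : Matrix (Fin (e - 1)) (Fin e) (ZMod p) :=
  Matrix.of fun i j => if (i : ℕ) = (j : ℕ) then 1 else 0

/-- The `(e-1) × e` matrix `[0 | I_{e-1}]` obtained by deleting the last row of a
companion matrix. -/
def truncShift (p e : ℕ) : Matrix (Fin (e - 1)) (Fin e) (ZMod p) :=
  Matrix.of fun i j => if (i : ℕ) + 1 = (j : ℕ) then 1 else 0

/-- Extension of a vector in `(ZMod p)^(e-1)` to `(ZMod p)^e` by a final zero. -/
def extendZero (p e : ℕ) (a : Fin (e - 1) → ZMod p) : Fin e → ZMod p :=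
  fun j => if h : (j : ℕ) < e - 1 then a ⟨j, h⟩ else 0

/-!
Right multiplication of the first coordinate by a matrix `P` is a homomorphism
`B(P L₁, …, P L_t) → B(L₁, …, L_t)`. For `P = [I_{e-1} | 0]` we have `P I_e = L` and
`P C(a) = L'`, since deleting the last row of `C(a)` leaves `[0 | I_{e-1}]`; this gives the
embedding `M → G`. Its image is the kernel of the last coordinate of `a`, a homomorphism onto
`Z_p`, so it has prime index and is maximal.

For the ranks: the commutator of `(e_i, 0, 0)` and `(0, e_j, 0)` is the central element
`(0, 0, (L₁ i j, …, L_t i j))`. When these entry vectors include every unit vector of `Z_p^t`,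
the `r + s` elements `(e_i, 0, 0)`, `(0, e_j, 0)` generate `B`, while `B` maps onto the
`Z_p`-space `Z_p^r × Z_p^s`; hence `d(B) = r + s`. Both `G` and `M` qualify, so
`d(G) = 2e = 1 + d(M)`.
-/

open Matrix
open scoped commutatorElement

lemma AddSubgroup.eq_top_of_forall_single_one_mem {p : ℕ} {ι : Type*} [Fintype ι]
    [DecidableEq ι] (K : AddSubgroup (ι → ZMod p)) (h : ∀ i, Pi.single i 1 ∈ K) : K = ⊤ := by
  have hspan : Submodule.span (ZMod p) (Set.range (Pi.basisFun (ZMod p) ι)) ≤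
      K.toZModSubmodule p :=
    Submodule.span_le.2 (Set.range_subset_iff.2 fun i => by simpa using h i)
  rw [(Pi.basisFun (ZMod p) ι).span_eq, top_le_iff] at hspan
  exact (map_eq_top_iff (AddSubgroup.toZModSubmodule p)).1 hspan

lemma Group.finrank_le_rank_of_surjective {p : ℕ} [Fact p.Prime] {G V : Type*} [Group G]
    [Group.FG G] [AddCommGroup V] [Module (ZMod p) V] (f : G →* Multiplicative V)
    (hf : Function.Surjective f) : Module.finrank (ZMod p) V ≤ Group.rank G := by
  classical
  obtain ⟨S, hcard, hS⟩ := Group.rank_spec G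
  set T : Set V := Multiplicative.toAdd '' (f '' S)
  have hT : Submodule.span (ZMod p) T = ⊤ := by
    have hclosure : Subgroup.closure (f '' S) = ⊤ := by
      rw [← MonoidHom.map_closure, hS, ← MonoidHom.range_eq_map, f.range_eq_top_of_surjective hf]
    have hle : Subgroup.closure (f '' S) ≤
        AddSubgroup.toSubgroup (Submodule.span (ZMod p) T).toAddSubgroup :=
      Subgroup.closure_le _ |>.2 fun x hx =>
        show Multiplicative.toAdd x ∈ Submodule.span (ZMod p) T from
          Submodule.subset_span ⟨x, hx, rfl⟩
    rw [hclosure, top_le_iff] at hle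
    exact eq_top_iff.2 fun v _ => hle.ge (Subgroup.mem_top (Multiplicative.ofAdd v))
  calc Module.finrank (ZMod p) V = Module.finrank (ZMod p) (Submodule.span (ZMod p) T) := by
        rw [hT, finrank_top]
    _ ≤ T.toFinset.card := finrank_span_le_card T
    _ ≤ S.card := by
        simp only [T, Set.toFinset_image, Finset.toFinset_coe]
        exact Finset.card_image_le.trans Finset.card_image_le
    _ = Group.rank G := hcard

lemma Subgroup.isCoatom_of_prime_index {G : Type*} [Group G] {H : Subgroup G}
    (hH : H.index.Prime) : IsCoatom H := by
  refine ⟨fun htop => by simp [htop, Nat.not_prime_one] at hH, fun K hK => ?_⟩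
  rcases hH.eq_one_or_self_of_dvd K.index (Subgroup.index_dvd_of_le hK.le) with h | h
  · exact Subgroup.index_eq_one.1 h
  · have := Subgroup.relIndex_mul_index hK.le
    rw [h] at this
    exact absurd (Subgroup.relIndex_eq_one.1 (by simpa [hH.ne_zero] using this)) hK.not_ge

lemma MonoidHom.range_le_of_forall_single_mem {p : ℕ} {ι G : Type*} [Fintype ι]
    [DecidableEq ι] [Group G] (f : Multiplicative (ι → ZMod p) →* G) {H : Subgroup G}
    (hf : ∀ i, f (.ofAdd (Pi.single i 1)) ∈ H) : f.range ≤ H := by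
  have hcomap : (H.comap f).toAddSubgroup' = ⊤ :=
    AddSubgroup.eq_top_of_forall_single_one_mem _ hf
  rintro _ ⟨u, rfl⟩
  exact ((map_eq_top_iff _).1 hcomap).ge (Subgroup.mem_top u)

namespace BGroup

variable {p r s t : ℕ} {L : Fin t → Matrix (Fin r) (Fin s) (ZMod p)}

-- Tuple literals elaborate at the underlying product type, where the simp lemmas below
-- do not fire.
def mk (a : Fin r → ZMod p) (b : Fin s → ZMod p) (c : Fin t → ZMod p) : BGroup p r s t L :=
  (a, b, c)

@[simp] lemma fst_mk (a : Fin r → ZMod p) (b : Fin s → ZMod p) (c : Fin t → ZMod p) :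
    (mk a b c : BGroup p r s t L).1 = a := rfl

@[simp] lemma snd_fst_mk (a : Fin r → ZMod p) (b : Fin s → ZMod p) (c : Fin t → ZMod p) :
    (mk a b c : BGroup p r s t L).2.1 = b := rfl

@[simp] lemma snd_snd_mk (a : Fin r → ZMod p) (b : Fin s → ZMod p) (c : Fin t → ZMod p) :
    (mk a b c : BGroup p r s t L).2.2 = c := rfl

lemma ext {x y : BGroup p r s t L} (h₁ : x.1 = y.1) (h₂ : x.2.1 = y.2.1)
    (h₃ : ∀ k, x.2.2 k = y.2.2 k) : x = y :=
  Prod.ext h₁ (Prod.ext h₂ (funext h₃))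

@[simp] lemma fst_one : (1 : BGroup p r s t L).1 = 0 := rfl

@[simp] lemma snd_fst_one : (1 : BGroup p r s t L).2.1 = 0 := rfl

@[simp] lemma snd_snd_one : (1 : BGroup p r s t L).2.2 = 0 := rfl

@[simp] lemma fst_mul (x y : BGroup p r s t L) : (x * y).1 = x.1 + y.1 := rfl

@[simp] lemma snd_fst_mul (x y : BGroup p r s t L) : (x * y).2.1 = x.2.1 + y.2.1 := rfl

@[simp] lemma snd_snd_mul_apply (x y : BGroup p r s t L) (k : Fin t) :
    (x * y).2.2 k = x.2.2 k + y.2.2 k + x.1 ⬝ᵥ L k *ᵥ y.2.1 := rfl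

@[simp] lemma fst_inv (x : BGroup p r s t L) : x⁻¹.1 = -x.1 := rfl

@[simp] lemma snd_fst_inv (x : BGroup p r s t L) : x⁻¹.2.1 = -x.2.1 := rfl

@[simp] lemma snd_snd_inv_apply (x : BGroup p r s t L) (k : Fin t) :
    x⁻¹.2.2 k = -x.2.2 k + x.1 ⬝ᵥ L k *ᵥ x.2.1 := rfl

@[simps]
def ofFst : Multiplicative (Fin r → ZMod p) →* BGroup p r s t L where
  toFun u := mk u.toAdd 0 0
  map_one' := rfl
  map_mul' u v := by apply BGroup.ext <;> intros <;> simp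

@[simps]
def ofSnd : Multiplicative (Fin s → ZMod p) →* BGroup p r s t L where
  toFun v := mk 0 v.toAdd 0
  map_one' := rfl
  map_mul' u v := by apply BGroup.ext <;> intros <;> simp

@[simps]
def ofCenter : Multiplicative (Fin t → ZMod p) →* BGroup p r s t L where
  toFun c := mk 0 0 c.toAdd
  map_one' := rfl
  map_mul' u v := by apply BGroup.ext <;> intros <;> simp

lemma ofFst_mul_ofSnd_mul_ofCenter (x : BGroup p r s t L) :
    ofFst (.ofAdd x.1) * ofSnd (.ofAdd x.2.1) *
      ofCenter (.ofAdd (x.2.2 - fun k => x.1 ⬝ᵥ L k *ᵥ x.2.1)) = x := by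
  apply BGroup.ext <;> intros <;> simp

lemma commutatorElement_ofFst_ofSnd (u : Fin r → ZMod p) (v : Fin s → ZMod p) :
    ⁅(ofFst (.ofAdd u) : BGroup p r s t L), (ofSnd (.ofAdd v) : BGroup p r s t L)⁆ =
      ofCenter (.ofAdd fun k => u ⬝ᵥ L k *ᵥ v) := by
  apply BGroup.ext <;> intros <;> simp [commutatorElement_def]

lemma eq_top_of_forall_single_mem {H : Subgroup (BGroup p r s t L)}
    (hfst : ∀ i, ofFst (.ofAdd (Pi.single i 1)) ∈ H)
    (hsnd : ∀ j, ofSnd (.ofAdd (Pi.single j 1)) ∈ H)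
    (hcenter : ∀ k, ofCenter (.ofAdd (Pi.single k 1)) ∈ H) : H = ⊤ := by
  refine eq_top_iff.2 fun x _ =>
    ofFst_mul_ofSnd_mul_ofCenter x ▸ H.mul_mem (H.mul_mem ?_ ?_) ?_
  · exact MonoidHom.range_le_of_forall_single_mem _ hfst ⟨_, rfl⟩
  · exact MonoidHom.range_le_of_forall_single_mem _ hsnd ⟨_, rfl⟩
  · exact MonoidHom.range_le_of_forall_single_mem _ hcenter ⟨_, rfl⟩

def generator : Fin r ⊕ Fin s → BGroup p r s t L :=
  Sum.elim (fun i => ofFst (.ofAdd (Pi.single i 1))) (fun j => ofSnd (.ofAdd (Pi.single j 1)))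

lemma closure_range_generator (hL : ∀ k, ∃ i j, (fun k' => L k' i j) = Pi.single k 1) :
    Subgroup.closure (Set.range (generator : _ → BGroup p r s t L)) = ⊤ := by
  set H := Subgroup.closure (Set.range (generator : _ → BGroup p r s t L))
  have hgen : ∀ x, generator x ∈ H := fun x => Subgroup.subset_closure ⟨x, rfl⟩
  refine eq_top_of_forall_single_mem (fun i => hgen (.inl i)) (fun j => hgen (.inr j)) fun k => ?_
  obtain ⟨i, j, hij⟩ := hL k
  have hcomm : ⁅(generator (.inl i) : BGroup p r s t L),
      (generator (.inr j) : BGroup p r s t L)⁆ = ofCenter (.ofAdd (Pi.single k 1)) := by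
    rw [generator, Sum.elim_inl, Sum.elim_inr, commutatorElement_ofFst_ofSnd, ← hij]
    simp [mulVec_single]
  rw [← hcomm, commutatorElement_def]
  exact H.mul_mem (H.mul_mem (H.mul_mem (hgen _) (hgen _)) (H.inv_mem (hgen _)))
    (H.inv_mem (hgen _))

def projFstSnd : BGroup p r s t L →* Multiplicative ((Fin r → ZMod p) × (Fin s → ZMod p)) where
  toFun x := .ofAdd (x.1, x.2.1)
  map_one' := rfl
  map_mul' _ _ := rfl

lemma rank_eq [Fact p.Prime] (hL : ∀ k, ∃ i j, (fun k' => L k' i j) = Pi.single k 1) :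
    Group.rank (BGroup p r s t L) = r + s := by
  classical
  refine le_antisymm ?_ ?_
  · calc Group.rank (BGroup p r s t L) ≤ (Finset.univ.image generator).card :=
          Group.rank_le (by simpa using closure_range_generator hL)
      _ ≤ r + s := Finset.card_image_le.trans (by simp)
  · have := Group.finrank_le_rank_of_surjective (p := p) (projFstSnd : BGroup p r s t L →* _)
      fun v => ⟨mk v.toAdd.1 v.toAdd.2 0, rfl⟩
    simpa using this

@[simps]
def fstCoord (i : Fin r) : BGroup p r s t L →* Multiplicative (ZMod p) where
  toFun x := .ofAdd (x.1 i)
  map_one' := rfl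
  map_mul' _ _ := rfl

lemma index_ker_fstCoord [NeZero p] (i : Fin r) :
    (fstCoord i : BGroup p r s t L →* _).ker.index = p := by
  have hsurj : Function.Surjective (fstCoord i : BGroup p r s t L →* _) :=
    fun c => ⟨mk (fun _ => c.toAdd) 0 0, rfl⟩
  rw [Subgroup.index_ker, MonoidHom.range_eq_top_of_surjective _ hsurj, Subgroup.card_top,
    Nat.card_congr Multiplicative.toAdd, Nat.card_zmod]

def mapFst {r' : ℕ} {L' : Fin t → Matrix (Fin r') (Fin s) (ZMod p)}
    (P : Matrix (Fin r') (Fin r) (ZMod p)) (hL : ∀ k, L' k = P * L k) :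
    BGroup p r' s t L' →* BGroup p r s t L where
  toFun x := mk (x.1 ᵥ* P) x.2.1 x.2.2
  map_one' := by apply BGroup.ext <;> intros <;> simp
  map_mul' x y := by
    apply BGroup.ext <;> intros <;> simp [add_vecMul, hL, ← dotProduct_mulVec, mulVec_mulVec]

variable {r' : ℕ} {L' : Fin t → Matrix (Fin r') (Fin s) (ZMod p)}
  {P : Matrix (Fin r') (Fin r) (ZMod p)} (hL : ∀ k, L' k = P * L k)

lemma mapFst_injective (hP : Function.Injective (· ᵥ* P)) : Function.Injective (mapFst P hL) :=
  fun _ _ hxy => Prod.ext (hP (congrArg (·.1) hxy)) (congrArg (·.2) hxy)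

lemma mem_range_mapFst {x : BGroup p r s t L} :
    x ∈ (mapFst P hL).range ↔ x.1 ∈ Set.range (· ᵥ* P) := by
  constructor
  · rintro ⟨y, rfl⟩
    exact ⟨y.1, rfl⟩
  · rintro ⟨u, hu⟩
    exact ⟨mk u x.2.1 x.2.2, BGroup.ext hu rfl fun _ => rfl⟩

end BGroup

section Companion

variable {p e : ℕ}

lemma extendZero_eq_vecMul_truncId : extendZero p e = (· ᵥ* truncId p e) := by
  ext u j
  by_cases hj : (j : ℕ) < e - 1
  · rw [vecMul, dotProduct, Finset.sum_eq_single ⟨j, hj⟩] <;>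
      simp_all [extendZero, truncId, Fin.ext_iff]
  · rw [vecMul, dotProduct, Finset.sum_eq_zero fun i _ => ?_]
    · simp [extendZero, hj]
    · have : (i : ℕ) ≠ j := by omega
      simp [truncId, this]

lemma extendZero_injective : Function.Injective (extendZero p e) := by
  intro u v huv
  ext i
  simpa [extendZero] using congrFun huv (Fin.castLE (Nat.sub_le e 1) i)

lemma mem_range_extendZero {w : Fin e → ZMod p} {i : Fin e} (hi : (i : ℕ) + 1 = e) :
    w ∈ Set.range (extendZero p e) ↔ w i = 0 := by
  constructor
  · rintro ⟨u, rfl⟩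
    simp [extendZero]; omega
  · intro hw
    refine ⟨fun j => w (Fin.castLE (Nat.sub_le e 1) j), funext fun j => ?_⟩
    by_cases hj : (j : ℕ) < e - 1
    · simp [extendZero, hj]
    · obtain rfl : j = i := Fin.ext (by omega)
      simp [extendZero, hj, hw]

lemma truncId_mul_companionMx (a : Polynomial (ZMod p)) :
    truncId p e * companionMx p e a = truncShift p e := by
  ext i j
  have hi : (i : ℕ) + 1 ≠ e := by omega
  rw [mul_apply, Finset.sum_eq_single ⟨i, by omega⟩]
  · simp [truncId, companionMx, truncShift, hi]
  · intro b _ hb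
    have : (i : ℕ) ≠ b := fun h => hb (Fin.ext h.symm)
    simp [truncId, this]
  · simp

lemma exists_entries_eq_single_one_companionMx (he : 2 ≤ e) (a : Polynomial (ZMod p)) :
    ∀ k, ∃ i j, (fun k' => ![1, companionMx p e a] k' i j) = Pi.single k 1 := by
  have hne : ¬ (0 + 1 = e) := by omega
  refine Fin.forall_fin_two.2
    ⟨⟨⟨0, by omega⟩, ⟨0, by omega⟩, ?_⟩, ⟨⟨0, by omega⟩, ⟨1, by omega⟩, ?_⟩⟩ <;>
    ext k' <;> fin_cases k' <;> simp [companionMx, hne, one_apply]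

lemma exists_entries_eq_single_one_truncId_truncShift (he : 2 ≤ e) :
    ∀ k, ∃ i j, (fun k' => ![truncId p e, truncShift p e] k' i j) = Pi.single k 1 := by
  refine Fin.forall_fin_two.2
    ⟨⟨⟨0, by omega⟩, ⟨0, by omega⟩, ?_⟩, ⟨⟨0, by omega⟩, ⟨1, by omega⟩, ?_⟩⟩ <;>
    ext k' <;> fin_cases k' <;> simp [truncId, truncShift]

end Companion

theorem bgroup_maximal_subgroup_of_companion_general
    (p : ℕ) [Fact p.Prime] (e : ℕ) (he : 2 ≤ e)
    (a : Polynomial (ZMod p)) :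
    ∃ φ : BGroup p (e - 1) e 2 ![truncId p e, truncShift p e] →*
          BGroup p e e 2 ![1, companionMx p e a],
      (∀ x : BGroup p (e - 1) e 2 ![truncId p e, truncShift p e],
          φ x = (extendZero p e x.1, x.2.1, x.2.2)) ∧
      Function.Injective φ ∧
      IsCoatom φ.range ∧
      Group.rank (BGroup p e e 2 ![1, companionMx p e a]) =
        1 + Group.rank (BGroup p (e - 1) e 2 ![truncId p e, truncShift p e]) := by
  have hL : ∀ k, ![truncId p e, truncShift p e] k = truncId p e * ![1, companionMx p e a] k :=
    Fin.forall_fin_two.2 ⟨(Matrix.mul_one _).symm, (truncId_mul_companionMx a).symm⟩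
  set φ := BGroup.mapFst (truncId p e) hL
  have hrange : φ.range = (BGroup.fstCoord ⟨e - 1, by omega⟩).ker := by
    ext x
    rw [BGroup.mem_range_mapFst, MonoidHom.mem_ker, BGroup.fstCoord_apply, ofAdd_eq_one,
      ← mem_range_extendZero (show e - 1 + 1 = e by omega), extendZero_eq_vecMul_truncId]
  refine ⟨φ, fun x => ?_, BGroup.mapFst_injective hL ?_, ?_, ?_⟩
  · rw [extendZero_eq_vecMul_truncId]; rfl
  · exact extendZero_eq_vecMul_truncId ▸ extendZero_injective
  · rw [hrange]
    exact Subgroup.isCoatom_of_prime_index (by rw [BGroup.index_ker_fstCoord]; exact Fact.out)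
  · rw [BGroup.rank_eq (exists_entries_eq_single_one_companionMx he a),
      BGroup.rank_eq (exists_entries_eq_single_one_truncId_truncShift he)]
    omega

/-- For `p > 2` prime, `e ≥ 2` and `a(t)` a monic polynomial of
degree `e` over `Z_p`, set `G = B(I_e, C(a(t)))` and `M = B([I_{e-1}|0], [0|I_{e-1}])`.
Then `(a,b,c) ↦ ((a,0),b,c)` is an injective group homomorphism `M → G` whose image
is a maximal subgroup of `G`, and `d(G) = 1 + d(M)`.  (In particular `G` has a maximal
subgroup whose isomorphism type depends only on `p` and `e`, since `M` does not
depend on `a(t)`.) -/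
theorem bgroup_maximal_subgroup_of_companion
    (p : ℕ) [Fact p.Prime] (hp2 : 2 < p) (e : ℕ) (he : 2 ≤ e)
    (a : Polynomial (ZMod p)) (ha : a.Monic) (hdeg : a.natDegree = e) :
    ∃ φ : BGroup p (e - 1) e 2 ![truncId p e, truncShift p e] →*
          BGroup p e e 2 ![1, companionMx p e a],
      (∀ x : BGroup p (e - 1) e 2 ![truncId p e, truncShift p e],
          φ x = (extendZero p e x.1, x.2.1, x.2.2)) ∧
      Function.Injective φ ∧
      IsCoatom φ.range ∧
      Group.rank (BGroup p e e 2 ![1, companionMx p e a]) =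
        1 + Group.rank (BGroup p (e - 1) e 2 ![truncId p e, truncShift p e]) :=
  bgroup_maximal_subgroup_of_companion_general p e he a
end

section
/- Let p be a prime and e a prime. Let K and A be subrings of the matrix ring M_e(Z_p) (containing the identity matrix) with K ⊆ A, and suppose K is a field with p^e elements. Then A = K or A = M_e(Z_p). -/
open Polynomial Finset

namespace St13

abbrev Mat (p e : ℕ) := Matrix (Fin e) (Fin e) (ZMod p)

variable {p e : ℕ} {K : Subring (Mat p e)}

/-- `x` is semilinear with respect to the map `σ` on `K`. -/
def SLin (K : Subring (Mat p e)) (σ : ↥K → ↥K) (x : Mat p e) : Prop :=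
  ∀ k : ↥K, x * (k : Mat p e) = ((σ k : ↥K) : Mat p e) * x

theorem cancel_left (hK : IsField ↥K) {k : ↥K} (hk : k ≠ 0) {x : Mat p e}
    (h : (k : Mat p e) * x = 0) : x = 0 := by
  obtain ⟨k', hk'⟩ := hK.mul_inv_cancel hk
  have h1 : x = ((k' * k : ↥K) : Mat p e) * x := by
    rw [hK.mul_comm k' k, hk']; simp
  rw [h1]
  push_cast
  rw [mul_assoc, h, mul_zero]

theorem cancel_right (hK : IsField ↥K) {k : ↥K} (hk : k ≠ 0) {x : Mat p e}
    (h : x * (k : Mat p e) = 0) : x = 0 := by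
  obtain ⟨k', hk'⟩ := hK.mul_inv_cancel hk
  have h1 : x = x * ((k * k' : ↥K) : Mat p e) := by rw [hk']; simp
  rw [h1]
  push_cast
  rw [← mul_assoc, h, zero_mul]

theorem coe_eq_of_mul (hK : IsField ↥K) {k k' : ↥K} {x : Mat p e} (hx : x ≠ 0)
    (h : (k : Mat p e) * x = (k' : Mat p e) * x) : k = k' := by
  by_contra hne
  have hsub : ((k - k' : ↥K) : Mat p e) * x = 0 := by
    push_cast
    rw [sub_mul, h, sub_self]
  exact hx (cancel_left hK (sub_ne_zero.mpr hne) hsub)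

theorem ext_mulVec {M N : Mat p e} (h : ∀ v : Fin e → ZMod p, M.mulVec v = N.mulVec v) :
    M = N := by
  ext i j
  have := congrFun (h (Pi.single j 1)) i
  simpa using this

theorem vec_cancel (hK : IsField ↥K) {k : ↥K} (hk : k ≠ 0) {v : Fin e → ZMod p}
    (h : (k : Mat p e).mulVec v = 0) : v = 0 := by
  obtain ⟨k', hk'⟩ := hK.mul_inv_cancel hk
  have h1 : v = ((k' * k : ↥K) : Mat p e).mulVec v := by
    rw [hK.mul_comm k' k, hk']; simp [Matrix.one_mulVec]
  rw [h1]
  push_cast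
  rw [← Matrix.mulVec_mulVec, h, Matrix.mulVec_zero]

theorem vec_surj (hp1 : 1 < p) (hK : IsField ↥K) (hcard : Nat.card ↥K = p ^ e)
    {v : Fin e → ZMod p} (hv : v ≠ 0) (w : Fin e → ZMod p) :
    ∃ k : ↥K, (k : Mat p e).mulVec v = w := by
  haveI : NeZero p := ⟨by omega⟩
  haveI : Fintype ↥K := Fintype.ofFinite _
  have hinj : Function.Injective (fun k : ↥K => (k : Mat p e).mulVec v) := by
    intro k k' h
    by_contra hne
    apply hv
    refine vec_cancel hK (k := k - k') (sub_ne_zero.mpr hne) ?_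
    dsimp only at h
    push_cast
    rw [Matrix.sub_mulVec, h, sub_self]
  have hc : Fintype.card ↥K = Fintype.card (Fin e → ZMod p) := by
    rw [← Nat.card_eq_fintype_card, hcard]
    simp [ZMod.card]
  have hbij := (Fintype.bijective_iff_injective_and_card _).mpr ⟨hinj, hc⟩
  exact hbij.2 w

theorem mem_of_comm (hp1 : 1 < p) (he0 : 0 < e) (hK : IsField ↥K)
    (hcard : Nat.card ↥K = p ^ e) {x : Mat p e}
    (hx : ∀ k : ↥K, x * (k : Mat p e) = (k : Mat p e) * x) : x ∈ K := by
  haveI : Fact (1 < p) := ⟨hp1⟩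
  haveI : NeZero p := ⟨by omega⟩
  set v₀ : Fin e → ZMod p := Pi.single ⟨0, he0⟩ 1 with hv₀def
  have hv₀ : v₀ ≠ 0 := by
    intro h
    have := congrFun h ⟨0, he0⟩
    simp [hv₀def] at this
  obtain ⟨k₀, hk₀⟩ := vec_surj hp1 hK hcard hv₀ (x.mulVec v₀)
  have : x = (k₀ : Mat p e) := by
    apply ext_mulVec
    intro v
    obtain ⟨k, hk⟩ := vec_surj hp1 hK hcard hv₀ v
    have hcomm : (k : Mat p e) * (k₀ : Mat p e) = (k₀ : Mat p e) * (k : Mat p e) := by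
      have := hK.mul_comm k k₀
      calc (k : Mat p e) * (k₀ : Mat p e) = ((k * k₀ : ↥K) : Mat p e) := by push_cast; rfl
        _ = ((k₀ * k : ↥K) : Mat p e) := by rw [this]
        _ = (k₀ : Mat p e) * (k : Mat p e) := by push_cast; rfl
    calc x.mulVec v = x.mulVec ((k : Mat p e).mulVec v₀) := by rw [hk]
      _ = (x * (k : Mat p e)).mulVec v₀ := by rw [Matrix.mulVec_mulVec]
      _ = ((k : Mat p e) * x).mulVec v₀ := by rw [hx k]
      _ = (k : Mat p e).mulVec (x.mulVec v₀) := by rw [Matrix.mulVec_mulVec]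
      _ = (k : Mat p e).mulVec ((k₀ : Mat p e).mulVec v₀) := by rw [hk₀]
      _ = ((k : Mat p e) * (k₀ : Mat p e)).mulVec v₀ := by rw [Matrix.mulVec_mulVec]
      _ = ((k₀ : Mat p e) * (k : Mat p e)).mulVec v₀ := by rw [hcomm]
      _ = (k₀ : Mat p e).mulVec ((k : Mat p e).mulVec v₀) := by rw [Matrix.mulVec_mulVec]
      _ = (k₀ : Mat p e).mulVec v := by rw [hk]
  rw [this]
  exact SetLike.coe_mem k₀

/-- A nonzero vector killed by a semilinear element forces the element to be zero. -/
theorem slin_killer (hp1 : 1 < p) (hK : IsField ↥K) (hcard : Nat.card ↥K = p ^ e)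
    {σ : ↥K → ↥K} {x : Mat p e} (hsl : SLin K σ x) {v : Fin e → ZMod p} (hv : v ≠ 0)
    (hxv : x.mulVec v = 0) : x = 0 := by
  apply ext_mulVec
  intro w
  obtain ⟨k, hk⟩ := vec_surj hp1 hK hcard hv w
  rw [Matrix.zero_mulVec, ← hk, Matrix.mulVec_mulVec, hsl k, ← Matrix.mulVec_mulVec, hxv,
    Matrix.mulVec_zero]

theorem slin_mul {σ τ : ↥K → ↥K} {x y : Mat p e} (hx : SLin K σ x) (hy : SLin K τ y) :
    SLin K (σ ∘ τ) (x * y) := by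
  intro k
  rw [mul_assoc, hy k, ← mul_assoc, hx (τ k), mul_assoc]
  rfl

theorem slin_mul_ne (hp1 : 1 < p) (he0 : 0 < e) (hK : IsField ↥K)
    (hcard : Nat.card ↥K = p ^ e) {σ τ : ↥K → ↥K} {x y : Mat p e}
    (hx0 : x ≠ 0) (hy0 : y ≠ 0) (hx : SLin K σ x) (hy : SLin K τ y) : x * y ≠ 0 := by
  haveI : Fact (1 < p) := ⟨hp1⟩
  haveI : NeZero p := ⟨by omega⟩
  set v₀ : Fin e → ZMod p := Pi.single ⟨0, he0⟩ 1 with hv₀def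
  have hv₀ : v₀ ≠ 0 := by
    intro h
    have := congrFun h ⟨0, he0⟩
    simp [hv₀def] at this
  intro hxy
  have hyv : y.mulVec v₀ ≠ 0 := by
    intro h
    exact hy0 (slin_killer hp1 hK hcard hy hv₀ h)
  apply hx0
  refine slin_killer hp1 hK hcard hx hyv ?_
  rw [Matrix.mulVec_mulVec, hxy, Matrix.zero_mulVec]

theorem slin_smul (hK : IsField ↥K) {σ : ↥K → ↥K} {x : Mat p e} (hx : SLin K σ x) (k : ↥K) :
    SLin K σ ((k : Mat p e) * x) := by
  intro k'
  rw [mul_assoc, hx k', ← mul_assoc, ← mul_assoc]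
  congr 1
  calc (k : Mat p e) * (σ k' : Mat p e) = ((k * σ k' : ↥K) : Mat p e) := by push_cast; rfl
    _ = ((σ k' * k : ↥K) : Mat p e) := by rw [hK.mul_comm]
    _ = ((σ k' : ↥K) : Mat p e) * (k : Mat p e) := by push_cast; rfl

theorem slin_sub {σ : ↥K → ↥K} {x y : Mat p e} (hx : SLin K σ x) (hy : SLin K σ y) :
    SLin K σ (x - y) := by
  intro k
  rw [sub_mul, mul_sub, hx k, hy k]

theorem slin_factor (hp1 : 1 < p) (he0 : 0 < e) (hK : IsField ↥K)
    (hcard : Nat.card ↥K = p ^ e) {σ : ↥K → ↥K} {x₀ y : Mat p e} (hx0 : x₀ ≠ 0)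
    (h0 : SLin K σ x₀) (hy : SLin K σ y) : ∃ k : ↥K, y = (k : Mat p e) * x₀ := by
  haveI : Fact (1 < p) := ⟨hp1⟩
  haveI : NeZero p := ⟨by omega⟩
  set v₀ : Fin e → ZMod p := Pi.single ⟨0, he0⟩ 1 with hv₀def
  have hv₀ : v₀ ≠ 0 := by
    intro h
    have := congrFun h ⟨0, he0⟩
    simp [hv₀def] at this
  have hs : x₀.mulVec v₀ ≠ 0 := by
    intro h
    exact hx0 (slin_killer hp1 hK hcard h0 hv₀ h)
  obtain ⟨k, hk⟩ := vec_surj hp1 hK hcard hs (y.mulVec v₀)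
  refine ⟨k, ?_⟩
  have hz : SLin K σ (y - (k : Mat p e) * x₀) := slin_sub hy (slin_smul hK h0 k)
  have hzv : (y - (k : Mat p e) * x₀).mulVec v₀ = 0 := by
    rw [Matrix.sub_mulVec, ← Matrix.mulVec_mulVec, hk, sub_self]
  have := slin_killer hp1 hK hcard hz hv₀ hzv
  rw [sub_eq_zero] at this
  exact this

/-- Every nonzero eigenvector of right multiplication by a generator is semilinear
with respect to some ring automorphism of `K`. -/
theorem slin_of_eig (hp1 : 1 < p) (hK : IsField ↥K) {a : ↥K}
    (hgen : ∀ k : ↥K, k ≠ 0 → ∃ n : ℕ, a ^ n = k) {x : Mat p e} {μ : ↥K} (hx : x ≠ 0)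
    (heig : x * (a : Mat p e) = (μ : Mat p e) * x) :
    ∃ σ : ↥K ≃+* ↥K, σ a = μ ∧ SLin K (⇑σ) x := by
  haveI : NeZero p := ⟨by omega⟩
  letI : Field ↥K := hK.toField
  have hpow : ∀ n : ℕ, x * ((a ^ n : ↥K) : Mat p e) = ((μ ^ n : ↥K) : Mat p e) * x := by
    intro n
    induction n with
    | zero => simp
    | succ n ih =>
      push_cast at ih ⊢
      rw [pow_succ, pow_succ, ← mul_assoc, ih, mul_assoc, heig, ← mul_assoc]
  have hex : ∀ k : ↥K, ∃ τ : ↥K, x * (k : Mat p e) = (τ : Mat p e) * x := by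
    intro k
    rcases eq_or_ne k 0 with rfl | hk
    · exact ⟨0, by simp⟩
    · obtain ⟨n, hn⟩ := hgen k hk
      exact ⟨μ ^ n, by rw [← hn]; exact hpow n⟩
  let φ : ↥K → ↥K := fun k => Classical.choose (hex k)
  have hφ : ∀ k : ↥K, x * (k : Mat p e) = ((φ k : ↥K) : Mat p e) * x := fun k =>
    Classical.choose_spec (hex k)
  have huniq : ∀ {k τ : ↥K}, x * (k : Mat p e) = (τ : Mat p e) * x → φ k = τ := by
    intro k τ h
    exact coe_eq_of_mul hK hx (by rw [← hφ k, h])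
  have hone : φ 1 = 1 := huniq (by simp)
  have hmul : ∀ k k' : ↥K, φ (k * k') = φ k * φ k' := by
    intro k k'
    apply huniq
    push_cast
    rw [← mul_assoc, hφ k, mul_assoc, hφ k', ← mul_assoc]
  have hadd : ∀ k k' : ↥K, φ (k + k') = φ k + φ k' := by
    intro k k'
    apply huniq
    push_cast
    rw [mul_add, hφ k, hφ k', add_mul]
  let φM : ↥K →* ↥K := ⟨⟨φ, hone⟩, hmul⟩
  let φR : ↥K →+* ↥K := RingHom.mk' φM hadd
  have hinj : Function.Injective φR := φR.injective
  have hbij : Function.Bijective φR := Finite.injective_iff_bijective.mp hinj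
  refine ⟨RingEquiv.ofBijective φR hbij, ?_, ?_⟩
  · exact huniq heig
  · intro k
    exact hφ k

section Abstract
variable {F S : Type*} [Field F] [Fintype F] [Ring S]

/-- Spectral decomposition of an element with respect to right multiplication by `ι a`. -/
theorem decomp (ι : F →+* S) (a : F) (x : S) :
    ∃ f : F → S, (∀ μ, f μ * ι a = ι μ * f μ)
      ∧ (∀ A : Subring S, (∀ k, ι k ∈ A) → x ∈ A → ∀ μ, f μ ∈ A)
      ∧ ∑ μ, f μ = x := by
  classical
  letI : Module F S := Module.compHom S ι
  have hsmul : ∀ (c : F) (m : S), c • m = ι c * m := fun _ _ => rfl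
  let d : Module.End F S :=
    { toFun := fun y => y * ι a
      map_add' := fun y z => add_mul y z _
      map_smul' := fun k y => by
        show (ι k * y) * ι a = ι k * (y * ι a)
        rw [mul_assoc] }
  have hd : ∀ y : S, d y = y * ι a := fun _ => rfl
  have hdpow : ∀ (n : ℕ) (y : S), (d ^ n) y = y * ι (a ^ n) := by
    intro n
    induction n with
    | zero => intro y; simp
    | succ n ih =>
      intro y
      rw [pow_succ', Module.End.mul_apply, hd, ih, pow_succ', map_mul, ← mul_assoc,
        mul_assoc, mul_assoc, ← map_mul, ← map_mul, mul_comm a]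
  set q := Fintype.card F with hqdef
  have hq2 : 1 < q := Fintype.one_lt_card
  -- the product identity
  have hprod : ∏ ν : F, (X - C ν) = X ^ q - X := by
    have hm : (X ^ q - X : F[X]).Monic := by
      apply monic_X_pow_sub
      calc degree (X : F[X]) = 1 := degree_X
        _ < (q : WithBot ℕ) := by exact_mod_cast hq2
    have hroots := FiniteField.roots_X_pow_card_sub_X F
    have hdeg := FiniteField.X_pow_card_sub_X_natDegree_eq F hq2
    have hcard : (X ^ q - X : F[X]).roots.card = (X ^ q - X : F[X]).natDegree := by
      rw [hroots, hdeg]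
      simp [hqdef]
    have := prod_multiset_X_sub_C_of_monic_of_roots_card_eq hm hcard
    rw [hroots] at this
    rw [← this]
    rfl
  have haevP : Polynomial.aeval d (X ^ q - X : F[X]) = 0 := by
    rw [map_sub, map_pow, aeval_X]
    ext y
    simp only [LinearMap.sub_apply, LinearMap.zero_apply, hdpow, hd]
    rw [FiniteField.pow_card, sub_self]
  -- eigen-evaluation
  have heig_pow : ∀ {y : S} {μ : F}, y * ι a = ι μ * y →
      ∀ n : ℕ, (d ^ n) y = ι (μ ^ n) * y := by
    intro y μ hy n
    induction n with
    | zero => simp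
    | succ n ih =>
      rw [pow_succ', Module.End.mul_apply, hd, ih, mul_assoc, hy, ← mul_assoc, ← map_mul,
        ← pow_succ]
  have heval : ∀ (Q : F[X]) {y : S} {μ : F}, y * ι a = ι μ * y →
      (Polynomial.aeval d Q) y = ι (Q.eval μ) * y := by
    intro Q y μ hy
    calc (Polynomial.aeval d Q) y
        = ∑ i ∈ Finset.range (Q.natDegree + 1), (Q.coeff i • d ^ i) y := by
          rw [aeval_eq_sum_range, LinearMap.sum_apply]
      _ = ∑ i ∈ Finset.range (Q.natDegree + 1), ι (Q.coeff i * μ ^ i) * y := by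
          refine Finset.sum_congr rfl fun i _ => ?_
          rw [LinearMap.smul_apply, hsmul, heig_pow hy, ← mul_assoc, ← map_mul]
      _ = ι (Q.eval μ) * y := by
          rw [eval_eq_sum_range, map_sum, Finset.sum_mul]
  have hmem : ∀ (Q : F[X]) (y : S) (A : Subring S), (∀ k, ι k ∈ A) → y ∈ A →
      (Polynomial.aeval d Q) y ∈ A := by
    intro Q y A hA hy
    rw [aeval_eq_sum_range, LinearMap.sum_apply]
    refine Subring.sum_mem A fun i _ => ?_
    rw [LinearMap.smul_apply, hsmul, hdpow]
    exact A.mul_mem (hA _) (A.mul_mem hy (hA _))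
  set B : F → F[X] := fun μ => Lagrange.basis Finset.univ id μ with hBdef
  have hfact : ∀ μ : F, ∃ c : F, (X - C μ) * B μ = C c * (X ^ q - X) := by
    intro μ
    refine ⟨∏ j ∈ Finset.univ.erase μ, (μ - j)⁻¹, ?_⟩
    have hB : B μ = C (∏ j ∈ Finset.univ.erase μ, (μ - j)⁻¹) *
        ∏ j ∈ Finset.univ.erase μ, (X - C j) := by
      rw [hBdef]
      simp only [Lagrange.basis, Lagrange.basisDivisor, id]
      rw [Finset.prod_mul_distrib, map_prod]
    rw [hB, ← mul_assoc, mul_comm (X - C μ), mul_assoc, ← hprod,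
      Finset.mul_prod_erase Finset.univ (fun j => X - C j) (Finset.mem_univ μ)]
  refine ⟨fun μ => (Polynomial.aeval d (B μ)) x, fun μ => ?_, fun A hA hx μ => hmem _ _ A hA hx, ?_⟩
  · -- eigen equation
    obtain ⟨c, hc⟩ := hfact μ
    have h0 : (Polynomial.aeval d ((X - C μ) * B μ)) x = 0 := by
      rw [hc, map_mul, haevP, mul_zero, LinearMap.zero_apply]
    rw [map_mul, map_sub, aeval_X, aeval_C, Module.End.mul_apply, LinearMap.sub_apply,
      Module.algebraMap_end_apply, hsmul, hd, sub_eq_zero] at h0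
    exact h0
  · have hsum : ∑ μ, B μ = 1 := Lagrange.sum_basis (Function.injective_id.injOn) Finset.univ_nonempty
    calc ∑ μ, (Polynomial.aeval d (B μ)) x = (Polynomial.aeval d (∑ μ, B μ)) x := by
          rw [map_sum, LinearMap.sum_apply]
      _ = x := by rw [hsum, map_one, Module.End.one_apply]

/-- Independence of the eigencomponents. -/
theorem indep (ι : F →+* S) (a : F) {n : Type*} [Fintype n] (μs : n → F)
    (hinj : Function.Injective μs) (g : n → S) (hg : ∀ i, g i * ι a = ι (μs i) * g i)
    (hsum : ∑ i, g i = 0) : ∀ i, g i = 0 := by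
  classical
  letI : Module F S := Module.compHom S ι
  have hsmul : ∀ (c : F) (m : S), c • m = ι c * m := fun _ _ => rfl
  let d : Module.End F S :=
    { toFun := fun y => y * ι a
      map_add' := fun y z => add_mul y z _
      map_smul' := fun k y => by
        show (ι k * y) * ι a = ι k * (y * ι a)
        rw [mul_assoc] }
  have hd : ∀ y : S, d y = y * ι a := fun _ => rfl
  have heig_pow : ∀ {y : S} {μ : F}, y * ι a = ι μ * y →
      ∀ m : ℕ, (d ^ m) y = ι (μ ^ m) * y := by
    intro y μ hy m
    induction m with
    | zero => simp
    | succ m ih =>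
      rw [pow_succ', Module.End.mul_apply, hd, ih, mul_assoc, hy, ← mul_assoc, ← map_mul,
        ← pow_succ]
  have heval : ∀ (Q : F[X]) {y : S} {μ : F}, y * ι a = ι μ * y →
      (Polynomial.aeval d Q) y = ι (Q.eval μ) * y := by
    intro Q y μ hy
    calc (Polynomial.aeval d Q) y
        = ∑ i ∈ Finset.range (Q.natDegree + 1), (Q.coeff i • d ^ i) y := by
          rw [aeval_eq_sum_range, LinearMap.sum_apply]
      _ = ∑ i ∈ Finset.range (Q.natDegree + 1), ι (Q.coeff i * μ ^ i) * y := by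
          refine Finset.sum_congr rfl fun i _ => ?_
          rw [LinearMap.smul_apply, hsmul, heig_pow hy, ← mul_assoc, ← map_mul]
      _ = ι (Q.eval μ) * y := by
          rw [eval_eq_sum_range, map_sum, Finset.sum_mul]
  intro i
  have h0 : (Polynomial.aeval d (Lagrange.basis Finset.univ id (μs i))) (∑ j, g j) = 0 := by
    rw [hsum, map_zero]
  rw [map_sum] at h0
  have hterm : ∀ j : n, (Polynomial.aeval d (Lagrange.basis Finset.univ id (μs i))) (g j)
      = if j = i then g i else 0 := by
    intro j
    rw [heval _ (hg j)]
    rcases eq_or_ne j i with rfl | hji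
    · have hb := Lagrange.eval_basis_self (s := (Finset.univ : Finset F)) (v := id)
        (Function.injective_id.injOn) (Finset.mem_univ (μs j))
      simp only [id_eq] at hb
      rw [if_pos rfl, hb, map_one, one_mul]
    · have hb := Lagrange.eval_basis_of_ne (s := (Finset.univ : Finset F)) (v := id)
        (i := μs i) (j := μs j) (fun h => hji (hinj h).symm) (Finset.mem_univ _)
      simp only [id_eq] at hb
      rw [if_neg hji, hb, map_zero, zero_mul]
  rw [Finset.sum_congr rfl (fun j _ => hterm j), Finset.sum_ite_eq' Finset.univ i
    (fun _ => g i)] at h0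
  simpa using h0

end Abstract

section Main

variable (p e : ℕ) (K A : Subring (Mat p e))

theorem main_thm (hp : p.Prime) (he : e.Prime) (hKA : K ≤ A) (hKfield : IsField ↥K)
    (hKcard : Nat.card ↥K = p ^ e) : A = K ∨ A = ⊤ := by
  classical
  have hp1 : 1 < p := hp.one_lt
  have he0 : 0 < e := he.pos
  haveI : NeZero p := ⟨by omega⟩
  haveI : NeZero e := ⟨by omega⟩
  haveI : Fact (1 < p) := ⟨hp1⟩
  letI : Field ↥K := hKfield.toField
  letI : Fintype ↥K := Fintype.ofFinite _
  haveI : Finite (RingAut ↥K) :=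
    Finite.of_injective (fun σ : RingAut ↥K => (⇑σ : ↥K → ↥K)) DFunLike.coe_injective
  have hone0 : (1 : Mat p e) ≠ 0 := by
    intro h
    have := congrFun (congrFun h ⟨0, he0⟩) ⟨0, he0⟩
    simp [Matrix.one_apply] at this
  -- generator of the multiplicative group
  obtain ⟨a0, ha0⟩ := IsCyclic.exists_generator (α := (↥K)ˣ)
  set a : ↥K := (a0 : ↥K) with hadef
  have hgen : ∀ k : ↥K, k ≠ 0 → ∃ n : ℕ, a ^ n = k := by
    intro k hk
    have h1 := ha0 (Units.mk0 k hk)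
    rw [← mem_powers_iff_mem_zpowers] at h1
    obtain ⟨m, hm⟩ := h1
    refine ⟨m, ?_⟩
    have := congrArg (Units.val) hm
    rw [Units.val_pow_eq_pow_val] at this
    simpa [hadef] using this
  have hdet : ∀ σ τ : RingAut ↥K, σ a = τ a → σ = τ := by
    intro σ τ h
    ext k
    rcases eq_or_ne k 0 with rfl | hk
    · simp
    · obtain ⟨m, rfl⟩ := hgen k hk
      rw [map_pow, map_pow, h]
  -- the subgroup G of automorphisms realized by nonzero semilinear elements
  let P : RingAut ↥K → Prop := fun σ => ∃ x : Mat p e, x ≠ 0 ∧ SLin K (⇑σ) x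
  have hPone : P 1 := ⟨1, hone0, fun k => by
    show (1 : Mat p e) * (k : Mat p e) = (k : Mat p e) * 1
    rw [one_mul, mul_one]⟩
  have hmulcoe : ∀ σ τ : RingAut ↥K, ⇑(σ * τ) = ⇑σ ∘ ⇑τ := fun _ _ => rfl
  have hPmul : ∀ σ τ : RingAut ↥K, P σ → P τ → P (σ * τ) := by
    rintro σ τ ⟨x, hx0, hx⟩ ⟨y, hy0, hy⟩
    refine ⟨x * y, slin_mul_ne hp1 he0 hKfield hKcard hx0 hy0 hx hy, ?_⟩
    rw [hmulcoe]
    exact slin_mul hx hy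
  have hPpow : ∀ (σ : RingAut ↥K) (n : ℕ), P σ → P (σ ^ n) := by
    intro σ n hσ
    induction n with
    | zero => simpa using hPone
    | succ n ih => rw [pow_succ]; exact hPmul _ _ ih hσ
  have hPinv : ∀ σ : RingAut ↥K, P σ → P σ⁻¹ := by
    intro σ hσ
    obtain ⟨m, hm0, hm1⟩ := isOfFinOrder_iff_pow_eq_one.mp (isOfFinOrder_of_finite σ)
    have : σ⁻¹ = σ ^ (m - 1) := by
      apply inv_eq_of_mul_eq_one_right
      rw [← pow_succ']
      have : m - 1 + 1 = m := by omega
      rw [this, hm1]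
    rw [this]
    exact hPpow σ (m - 1) hσ
  let G : Subgroup (RingAut ↥K) :=
    { carrier := setOf P
      one_mem' := hPone
      mul_mem' := fun {σ τ} hσ hτ => hPmul σ τ hσ hτ
      inv_mem' := fun {σ} hσ => hPinv σ hσ }
  letI : Fintype ↥G := Fintype.ofFinite _
  -- the semilinear pieces
  let Wset : RingAut ↥K → Set (Mat p e) := fun σ => {x | SLin K (⇑σ) x}
  have hWcard : ∀ σ : RingAut ↥K, P σ → Nat.card (Wset σ) = p ^ e := by
    rintro σ ⟨x₀, hx00, hx0⟩
    have hbij : Function.Bijective (fun k : ↥K => (⟨(k : Mat p e) * x₀,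
        slin_smul hKfield hx0 k⟩ : Wset σ)) := by
      constructor
      · intro k k' h
        have h2 : (k : Mat p e) * x₀ = (k' : Mat p e) * x₀ := congrArg Subtype.val h
        exact coe_eq_of_mul hKfield hx00 h2
      · rintro ⟨y, hy⟩
        obtain ⟨k, hk⟩ := slin_factor hp1 he0 hKfield hKcard hx00 hx0 hy
        exact ⟨k, by apply Subtype.ext; exact hk.symm⟩
    rw [← Nat.card_eq_of_bijective _ hbij, hKcard]
  -- surjectivity of the sum map
  have hsurj : ∀ x : Mat p e, ∃ g : (∀ σ : ↥G, Wset ↑σ),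
      (∑ σ : ↥G, (g σ : Mat p e)) = x ∧ (x ∈ A → ∀ σ : ↥G, (g σ : Mat p e) ∈ A) := by
    intro x
    obtain ⟨f, hfeig, hfmem, hfsum⟩ := decomp K.subtype a x
    have hWf : ∀ σ : ↥G, f ((σ : RingAut ↥K) a) ∈ Wset ↑σ := by
      intro σ
      rcases eq_or_ne (f ((σ : RingAut ↥K) a)) 0 with h0 | h0
      · rw [h0]; intro k; rw [zero_mul, mul_zero]
      · obtain ⟨τ, hτa, hτ⟩ := slin_of_eig hp1 hKfield hgen h0 (hfeig _)
        have hts : (τ : RingAut ↥K) = (σ : RingAut ↥K) := hdet _ _ (by rw [hτa])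
        rw [hts] at hτ; exact hτ
    refine ⟨fun σ => ⟨f ((σ : RingAut ↥K) a), hWf σ⟩, ?_, ?_⟩
    · have himg : ∀ μ : ↥K, μ ∉ Finset.image (fun σ : ↥G => (σ : RingAut ↥K) a) Finset.univ
          → f μ = 0 := by
        intro μ hμ
        by_contra h0
        obtain ⟨τ, hτa, hτ⟩ := slin_of_eig hp1 hKfield hgen h0 (hfeig μ)
        have hτG : (τ : RingAut ↥K) ∈ G := ⟨f μ, h0, hτ⟩
        exact hμ (Finset.mem_image.mpr ⟨⟨τ, hτG⟩, Finset.mem_univ _, hτa⟩)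
      have hinj' : ∀ σ ∈ (Finset.univ : Finset ↥G), ∀ τ ∈ (Finset.univ : Finset ↥G),
          (σ : RingAut ↥K) a = (τ : RingAut ↥K) a → σ = τ :=
        fun σ _ τ _ h => Subtype.ext (hdet _ _ h)
      calc ∑ σ : ↥G, f ((σ : RingAut ↥K) a)
          = ∑ μ ∈ Finset.image (fun σ : ↥G => (σ : RingAut ↥K) a) Finset.univ, f μ :=
            (Finset.sum_image hinj').symm
        _ = ∑ μ : ↥K, f μ :=
            Finset.sum_subset (Finset.subset_univ _) (fun μ _ hμ => himg μ hμ)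
        _ = x := hfsum
    · intro hxA σ
      exact hfmem A (fun k => hKA k.2) hxA _
  -- injectivity of the sum map
  have hinj : ∀ g h : (∀ σ : ↥G, Wset ↑σ),
      (∑ σ : ↥G, (g σ : Mat p e)) = (∑ σ : ↥G, (h σ : Mat p e)) → g = h := by
    intro g h hsum
    have hdiff : ∀ σ : ↥G, ((g σ : Mat p e) - (h σ : Mat p e)) * K.subtype a
        = K.subtype ((σ : RingAut ↥K) a) * ((g σ : Mat p e) - (h σ : Mat p e)) := by
      intro σ
      have h1 : SLin K (⇑(σ : RingAut ↥K)) ((g σ : Mat p e) - (h σ : Mat p e)) :=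
        slin_sub (g σ).2 (h σ).2
      exact h1 a
    have h0 : ∑ σ : ↥G, ((g σ : Mat p e) - (h σ : Mat p e)) = 0 := by
      rw [Finset.sum_sub_distrib, hsum, sub_self]
    have hz := indep K.subtype a (fun σ : ↥G => (σ : RingAut ↥K) a)
      (fun σ τ hστ => Subtype.ext (hdet _ _ hστ)) _ hdiff h0
    funext σ
    have h2 := hz σ
    rw [sub_eq_zero] at h2
    exact Subtype.ext h2
  -- counting: G has exactly e elements
  have hGcard : Nat.card ↥G = e := by
    have hbij : Function.Bijective
        (fun g : (∀ σ : ↥G, Wset ↑σ) => ∑ σ : ↥G, (g σ : Mat p e)) := by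
      constructor
      · intro g h hgh
        exact hinj g h hgh
      · intro x
        obtain ⟨g, hg, _⟩ := hsurj x
        exact ⟨g, hg⟩
    have hcard1 : Nat.card (∀ σ : ↥G, Wset ↑σ) = Nat.card (Mat p e) :=
      Nat.card_eq_of_bijective _ hbij
    have hcardM : Nat.card (Mat p e) = p ^ (e * e) := by
      have h1 : Nat.card (Mat p e) = Nat.card (Fin e → Fin e → ZMod p) :=
        Nat.card_congr (Matrix.of (m := Fin e) (n := Fin e) (α := ZMod p)).symm
      rw [h1, Nat.card_fun, Nat.card_fun, Nat.card_zmod, Nat.card_eq_fintype_card,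
        Fintype.card_fin, ← pow_mul]
    have hcardPi : Nat.card (∀ σ : ↥G, Wset ↑σ) = (p ^ e) ^ (Nat.card ↥G) := by
      rw [Nat.card_pi]
      have : ∀ σ : ↥G, Nat.card (Wset ↑σ) = p ^ e := fun σ => hWcard _ σ.2
      rw [Finset.prod_congr rfl (fun σ _ => this σ), Finset.prod_const, Finset.card_univ,
        Nat.card_eq_fintype_card]
    have heq : (p ^ e) ^ (Nat.card ↥G) = p ^ (e * e) := by rw [← hcardPi, hcard1, hcardM]
    rw [← pow_mul] at heq
    have := Nat.pow_right_injective hp.two_le heq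
    exact Nat.eq_of_mul_eq_mul_left he0 this
  -- case split
  by_cases hcomm : ∀ x ∈ A, ∀ k : ↥K, x * (k : Mat p e) = (k : Mat p e) * x
  · left
    refine le_antisymm (fun x hx => ?_) hKA
    exact mem_of_comm hp1 he0 hKfield hKcard (hcomm x hx)
  · right
    push_neg at hcomm
    obtain ⟨x, hxA, k₀, hk₀⟩ := hcomm
    obtain ⟨f, hfeig, hfmem, hfsum⟩ := decomp K.subtype a x
    have hbad : ∃ μ : ↥K, ¬ (∀ k : ↥K, f μ * (k : Mat p e) = (k : Mat p e) * f μ) := by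
      by_contra hall
      push_neg at hall
      apply hk₀
      rw [← hfsum, Finset.sum_mul, Finset.mul_sum]
      exact Finset.sum_congr rfl fun μ _ => hall μ k₀
    obtain ⟨μ, hμ⟩ := hbad
    have hy0 : f μ ≠ 0 := by
      intro h
      apply hμ
      intro k
      rw [h, zero_mul, mul_zero]
    obtain ⟨σ, hσa, hσ⟩ := slin_of_eig hp1 hKfield hgen hy0 (hfeig μ)
    have hyA : f μ ∈ A := hfmem A (fun k => hKA k.2) hxA μ
    have hσG : (σ : RingAut ↥K) ∈ G := ⟨f μ, hy0, hσ⟩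
    have hσne : (σ : RingAut ↥K) ≠ 1 := by
      intro h
      apply hμ
      intro k
      have h2 := hσ k
      rw [h] at h2
      exact h2
    set g0 : ↥G := ⟨σ, hσG⟩ with hg0def
    have hg0ne : g0 ≠ 1 := fun h => hσne (congrArg Subtype.val h)
    have hord : orderOf g0 = e := by
      have hdvd : orderOf g0 ∣ e := by
        have hd := orderOf_dvd_natCard g0
        rwa [hGcard] at hd
      rcases (Nat.Prime.eq_one_or_self_of_dvd he _ hdvd) with h1 | h1
      · exact absurd (orderOf_eq_one_iff.mp h1) hg0ne
      · exact h1
    have hzp : Subgroup.zpowers g0 = (⊤ : Subgroup ↥G) := by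
      apply Subgroup.eq_top_of_card_eq
      rw [Nat.card_zpowers, hord, hGcard]
    have hypow : ∀ n : ℕ, (f μ) ^ n ≠ 0 ∧ SLin K (⇑((σ : RingAut ↥K) ^ n)) ((f μ) ^ n) := by
      intro n
      induction n with
      | zero =>
        refine ⟨by simp [hone0], ?_⟩
        intro k
        rw [pow_zero, pow_zero]
        show (1 : Mat p e) * (k : Mat p e) = (k : Mat p e) * 1
        rw [one_mul, mul_one]
      | succ n ih =>
        constructor
        · rw [pow_succ']
          exact slin_mul_ne hp1 he0 hKfield hKcard hy0 ih.1 hσ ih.2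
        · rw [pow_succ' ((σ : RingAut ↥K)), pow_succ' (f μ), hmulcoe]
          exact slin_mul hσ ih.2
    have hWsubA : ∀ τ : ↥G, Wset ↑τ ⊆ (A : Set (Mat p e)) := by
      intro τ z hz
      obtain ⟨n, hn⟩ : ∃ n : ℕ, g0 ^ n = τ := by
        have hmem : τ ∈ Subgroup.zpowers g0 := by
          rw [hzp]
          exact Subgroup.mem_top τ
        rw [← mem_powers_iff_mem_zpowers] at hmem
        exact hmem
      have hcoe : ((g0 ^ n : ↥G) : RingAut ↥K) = (σ : RingAut ↥K) ^ n := by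
        push_cast
        rfl
      have hxn0 := (hypow n).1
      have hxnA : (f μ) ^ n ∈ A := A.pow_mem hyA n
      have hsl : SLin K (⇑((τ : ↥G) : RingAut ↥K)) ((f μ) ^ n) := by
        rw [← hn, hcoe]
        exact (hypow n).2
      obtain ⟨k, hk⟩ := slin_factor hp1 he0 hKfield hKcard hxn0 hsl hz
      rw [hk]
      exact A.mul_mem (hKA k.2) hxnA
    rw [eq_top_iff]
    intro z _
    obtain ⟨g, hg, _⟩ := hsurj z
    rw [← hg]
    exact Subring.sum_mem A (fun τ _ => hWsubA τ (g τ).2)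

end Main


end St13

/-- Let `p` and `e` be primes.  If `K ⊆ A` are subrings of the
matrix ring `M_e(Z_p)` and `K` is a field with `p^e` elements, then `A = K` or
`A` is the full matrix ring. -/
theorem subring_field_or_full
    (p e : ℕ) (hp : p.Prime) (he : e.Prime)
    (K A : Subring (Matrix (Fin e) (Fin e) (ZMod p)))
    (hKA : K ≤ A) (hKfield : IsField ↥K) (hKcard : Nat.card ↥K = p ^ e) :
    A = K ∨ A = ⊤ := by
  exact St13.main_thm p e K A hp he hKA hKfield hKcard
end

section
/- Let q = p^e be a prime power and let F_q be the finite field with q elements. For every ring automorphism φ of the matrix ring M_2(F_q) there exist an invertible matrix T ∈ GL_2(F_q) and a field automorphism σ of F_q such that φ(X) = T^{−1}·σ(X)·T for all X ∈ M_2(F_q), where σ(X) denotes the matrix obtained by applying σ to each entry of X. -/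
/-!
A ring automorphism `φ` of `Matrix n n K` preserves the centre, which consists of the scalar
matrices, and therefore induces a ring automorphism `σ` of `K`. Undoing `σ` entrywise turns `φ`
into a `K`-algebra automorphism of `Matrix n n K ≃ Module.End K (n → K)`, and such automorphisms
are inner by the Skolem–Noether theorem `AlgEquiv.eq_linearEquivConjAlgEquiv`.
-/

namespace Matrix

variable {n R : Type*} [Fintype n] [DecidableEq n] [CommSemiring R]

theorem mem_center_iff_mem_range_scalar {M : Matrix n n R} :
    M ∈ Subsemiring.center (Matrix n n R) ↔ M ∈ Set.range (scalar n) := by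
  rw [← center_eq_range]
  exact Iff.rfl

theorem map_scalar {S F : Type*} [CommSemiring S] [FunLike F R S] [RingHomClass F R S]
    (f : F) (r : R) : (scalar n r).map f = scalar n (f r) := by
  rw [scalar_apply, scalar_apply, diagonal_map (map_zero f)]

variable [Nonempty n]

variable (n R) in
noncomputable def scalarEquivCenter : R ≃+* Subsemiring.center (Matrix n n R) :=
  RingEquiv.ofBijective
    ((scalar n).codRestrict _ fun r => mem_center_iff_mem_range_scalar.2 ⟨r, rfl⟩)
    ⟨fun _ _ h => scalar_inj.1 congr(($h : Matrix n n R)), fun ⟨M, hM⟩ => by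
      obtain ⟨r, rfl⟩ := mem_center_iff_mem_range_scalar.1 hM
      exact ⟨r, rfl⟩⟩

noncomputable def baseRingEquiv (φ : Matrix n n R ≃+* Matrix n n R) : R ≃+* R :=
  (scalarEquivCenter n R).trans ((Subsemiring.centerCongr φ).trans (scalarEquivCenter n R).symm)

theorem scalar_baseRingEquiv (φ : Matrix n n R ≃+* Matrix n n R) (r : R) :
    scalar n (baseRingEquiv φ r) = φ (scalar n r) := by
  change (scalarEquivCenter n R ((scalarEquivCenter n R).symm
    (Subsemiring.centerCongr φ (scalarEquivCenter n R r))) : Matrix n n R) = _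
  rw [RingEquiv.apply_symm_apply]
  rfl

noncomputable def untwistAlgEquiv (φ : Matrix n n R ≃+* Matrix n n R) :
    Matrix n n R ≃ₐ[R] Matrix n n R :=
  AlgEquiv.ofRingEquiv (f := (baseRingEquiv φ).symm.mapMatrix.trans φ) fun r => by
    change φ ((scalar n r).map (baseRingEquiv φ).symm) = scalar n r
    rw [map_scalar, ← scalar_baseRingEquiv, RingEquiv.apply_symm_apply]

theorem untwistAlgEquiv_apply (φ : Matrix n n R ≃+* Matrix n n R) (X : Matrix n n R) :
    untwistAlgEquiv φ X = φ (X.map (baseRingEquiv φ).symm) := rfl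

omit [Nonempty n] in
theorem algEquiv_eq_conj {K : Type*} [Field K] (f : Matrix n n K ≃ₐ[K] Matrix n n K) :
    ∃ T : GL n K, ∀ X, f X = T * X * T⁻¹ := by
  obtain ⟨L, hL⟩ :=
    (toLinAlgEquiv'.symm.trans (f.trans toLinAlgEquiv')).eq_linearEquivConjAlgEquiv
  have hT (S : GL n K) : toLin' (S : Matrix n n K) = GeneralLinearGroup.toLin S := by
    rw [GeneralLinearGroup.coe_toLin]; rfl
  refine ⟨GeneralLinearGroup.toLin.symm (.ofLinearEquiv L), fun X => toLin'.injective ?_⟩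
  have hX := congr($hL (toLinAlgEquiv' X))
  simp only [AlgEquiv.trans_apply, AlgEquiv.symm_apply_apply, LinearEquiv.conjAlgEquiv_apply] at hX
  simp only [toLin'_mul, hT, map_inv, MulEquiv.apply_symm_apply]
  exact hX

theorem ringEquiv_eq_conj_map {K : Type*} [Field K] (φ : Matrix n n K ≃+* Matrix n n K) :
    ∃ (T : GL n K) (σ : K ≃+* K), ∀ X, φ X = T * X.map σ * T⁻¹ := by
  obtain ⟨T, hT⟩ := algEquiv_eq_conj (untwistAlgEquiv φ)
  refine ⟨T, baseRingEquiv φ, fun X => ?_⟩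
  rw [← hT, untwistAlgEquiv_apply, map_map]
  simp [Function.comp_def]

end Matrix

theorem ringAut_matrix_two_eq_conj_fieldAut_general
    (K : Type) [Field K]
    (φ : Matrix (Fin 2) (Fin 2) K ≃+* Matrix (Fin 2) (Fin 2) K) :
    ∃ (T : GL (Fin 2) K) (σ : K ≃+* K),
      ∀ X : Matrix (Fin 2) (Fin 2) K,
        φ X = (↑T⁻¹ : Matrix (Fin 2) (Fin 2) K) * X.map σ *
          (↑T : Matrix (Fin 2) (Fin 2) K) := by
  obtain ⟨T, σ, hφ⟩ := Matrix.ringEquiv_eq_conj_map φ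
  exact ⟨T⁻¹, σ, by simpa only [inv_inv] using hφ⟩

/-- **Skolem–Noether for `M₂(F_q)`.** Every ring automorphism `φ` of
the ring of `2 × 2` matrices over a finite field `K` of order `q = p^e` has the form
`φ(X) = T⁻¹ · σ(X) · T` for some invertible matrix `T` and field automorphism `σ`
of `K` (applied entrywise). -/
theorem ringAut_matrix_two_eq_conj_fieldAut
    (p e : ℕ) (hp : p.Prime) (he : 0 < e)
    (K : Type) [Field K] [Fintype K] (hK : Fintype.card K = p ^ e)
    (φ : Matrix (Fin 2) (Fin 2) K ≃+* Matrix (Fin 2) (Fin 2) K) :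
    ∃ (T : GL (Fin 2) K) (σ : K ≃+* K),
      ∀ X : Matrix (Fin 2) (Fin 2) K,
        φ X = (↑T⁻¹ : Matrix (Fin 2) (Fin 2) K) * X.map σ *
          (↑T : Matrix (Fin 2) (Fin 2) K) :=
  ringAut_matrix_two_eq_conj_fieldAut_general K φ
end
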